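/- arXiv:2504.13808 — 7 statements merged into one kernel-verified Lean document; each statement's English description precedes it below -/
import Mathlib

section
/- Let G be a finite connected graph, B a block of G inducing a complete subgraph, and u, v ∈ B vertices such that v is a cut vertex of G and u is not a cut vertex of G. Then e(u) - 1 ≤ e(v) ≤ e(u), where e denotes vertex eccentricity with respect to the graph distance. -/
open SimpleGraph

variable {V : Type*}

/-- The eccentricity of a vertex: the maximum graph distance to any other vertex. -/
noncomputable def ecc (G : SimpleGraph V) [Fintype V] (v : V) : ℕ :=
  Finset.univ.sup (G.dist v)

/-- The centre of a graph: the set of vertices of minimum eccentricity. -/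
def graphCenter (G : SimpleGraph V) [Fintype V] : Set V :=
  {v | ∀ u : V, ecc G v ≤ ecc G u}

/-- A cut vertex: removing it increases the number of connected components
(with the convention that the unique vertex of a one-vertex graph is a cut vertex). -/
def IsCutVertex (G : SimpleGraph V) (v : V) : Prop :=
  (∀ w : V, w = v) ∨
    Nat.card G.ConnectedComponent < Nat.card (G.induce {v}ᶜ).ConnectedComponent

/-- A (finite, simple, loopless) graph is 2-connected if deleting any vertex
leaves it connected. -/
def IsTwoConnectedGraph (G : SimpleGraph V) : Prop :=
  ∀ v : V, (G.induce {v}ᶜ).Connected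

/-- A block of `G`: (the vertex set of) a maximal 2-connected subgraph. -/
def IsBlock (G : SimpleGraph V) (B : Set V) : Prop :=
  IsTwoConnectedGraph (G.induce B) ∧
    ∀ C : Set V, B ⊆ C → IsTwoConnectedGraph (G.induce C) → C = B

/-- A complete block: a block inducing a complete subgraph. -/
def IsCompleteBlock (G : SimpleGraph V) (B : Set V) : Prop :=
  IsBlock G B ∧ ∀ x ∈ B, ∀ y ∈ B, x ≠ y → G.Adj x y

/-- A block graph: all blocks are complete. -/
def IsBlockGraph (G : SimpleGraph V) : Prop :=
  ∀ B : Set V, IsBlock G B → ∀ x ∈ B, ∀ y ∈ B, x ≠ y → G.Adj x y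

/-- Reachability within an induced subgraph from a walk whose support stays inside. -/
private lemma reach_in {G : SimpleGraph V} {S : Set V} :
    ∀ {a b : V} (W : G.Walk a b), (∀ z ∈ W.support, z ∈ S) →
      ∀ (ha : a ∈ S) (hb : b ∈ S), (G.induce S).Reachable ⟨a, ha⟩ ⟨b, hb⟩ := by
  intro a b W
  induction W with
  | nil => intro _ ha hb; exact Reachable.refl _
  | @cons x y z hxy p ih =>
    intro hW ha hb
    have hy : y ∈ S := hW y (by simp)
    have h1 : (G.induce S).Adj ⟨x, ha⟩ ⟨y, hy⟩ := hxy
    exact h1.reachable.trans (ih (fun t ht => hW t (by simp [ht])) hy hb)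

private lemma conn_of_hub {G : SimpleGraph V} {T : Set V} {h0 : V} (hh : h0 ∈ T)
    (hre : ∀ z (hz : z ∈ T), (G.induce T).Reachable ⟨z, hz⟩ ⟨h0, hh⟩) :
    (G.induce T).Connected := by
  haveI : Nonempty ↑T := ⟨⟨h0, hh⟩⟩
  exact Connected.mk fun a b => (hre a.1 a.2).trans (hre b.1 b.2).symm

private lemma conn_del_of_not_cut {G : SimpleGraph V} [Fintype V] (hG : G.Connected)
    {u x : V} (hx : x ≠ u) (h : ¬ IsCutVertex G u) :
    (G.induce {u}ᶜ).Connected := by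
  rw [IsCutVertex, not_or, not_lt] at h
  obtain ⟨-, h2⟩ := h
  have hxc : x ∈ ({u}ᶜ : Set V) := hx
  have h1 : Nat.card G.ConnectedComponent = 1 := by
    have hs : Subsingleton G.ConnectedComponent :=
      ⟨ConnectedComponent.ind₂ fun a b => ConnectedComponent.sound (hG.preconnected a b)⟩
    have hn : Nonempty G.ConnectedComponent := ⟨G.connectedComponentMk x⟩
    exact Nat.card_eq_one_iff_unique.mpr ⟨hs, hn⟩
  rw [h1] at h2
  have hn : Nonempty (G.induce {u}ᶜ).ConnectedComponent :=
    ⟨(G.induce {u}ᶜ).connectedComponentMk ⟨x, hxc⟩⟩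
  have hss : Subsingleton (G.induce {u}ᶜ).ConnectedComponent := by
    by_contra hns
    rw [not_subsingleton_iff_nontrivial] at hns
    have := Finite.one_lt_card_iff_nontrivial.mpr hns
    omega
  haveI : Nonempty ↑({u}ᶜ : Set V) := ⟨⟨x, hxc⟩⟩
  exact Connected.mk fun a b => ConnectedComponent.eq.mp (Subsingleton.elim _ _)

private lemma twoConn_of_del {G : SimpleGraph V} {S : Set V}
    (h : ∀ x ∈ S, (G.induce (S \ {x})).Connected) :
    IsTwoConnectedGraph (G.induce S) := by
  intro w
  have hc := h w.1 w.2
  let e : (({w}ᶜ : Set ↑S) : Type _) ≃ ↑(S \ {(w : V)}) :=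
    { toFun := fun x => ⟨x.1.1, x.1.2, fun hx => x.2 (Subtype.ext hx)⟩
      invFun := fun x => ⟨⟨x.1, x.2.1⟩, fun hh => x.2.2 (congrArg Subtype.val hh)⟩
      left_inv := fun x => rfl
      right_inv := fun x => rfl }
  have iso : (G.induce S).induce ({w}ᶜ : Set ↑S) ≃g G.induce (S \ {(w : V)}) :=
    { toEquiv := e, map_rel_iff' := Iff.rfl }
  exact iso.connected_iff.mpr hc

private lemma path_split {G : SimpleGraph V} {a b : V} {P : G.Walk a b} (hP : P.IsPath)
    {x z : V} (hx : x ∈ P.support) (hz : z ∈ P.support) (hzx : z ≠ x) :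
    (∃ W : G.Walk a z, x ∉ W.support ∧ ∀ t ∈ W.support, t ∈ P.support) ∨
    (∃ W : G.Walk z b, x ∉ W.support ∧ ∀ t ∈ W.support, t ∈ P.support) := by
  classical
  have hz' : z ∈ (P.takeUntil x hx).support ∨ z ∈ (P.dropUntil x hx).support := by
    rw [← Walk.mem_support_append_iff, P.take_spec hx]; exact hz
  cases hz' with
  | inl hz1 =>
    left
    set Q := P.takeUntil x hx with hQdef
    have hQP : Q.IsPath := hP.takeUntil hx
    refine ⟨Q.takeUntil z hz1, ?_, fun t ht =>
      P.support_takeUntil_subset hx (Q.support_takeUntil_subset hz1 ht)⟩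
    intro hxW
    have hxd : x ∈ (Q.dropUntil z hz1).support := Walk.end_mem_support _
    have hnd' : ((Q.takeUntil z hz1).support ++ (Q.dropUntil z hz1).support.tail).Nodup := by
      rw [← Walk.support_append, Q.take_spec hz1]; exact hQP.support_nodup
    have hdisj := List.disjoint_of_nodup_append hnd'
    rw [(Q.dropUntil z hz1).support_eq_cons] at hxd
    rcases List.mem_cons.mp hxd with h | h
    · exact hzx h.symm
    · exact hdisj hxW h
  | inr hz2 =>
    right
    set R := P.dropUntil x hx with hRdef
    have hRP : R.IsPath := hP.dropUntil hx
    refine ⟨R.dropUntil z hz2, ?_, fun t ht =>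
      P.support_dropUntil_subset hx (R.support_dropUntil_subset hz2 ht)⟩
    intro hxW
    have hnd' : ((R.takeUntil z hz2).support ++ (R.dropUntil z hz2).support.tail).Nodup := by
      rw [← Walk.support_append, R.take_spec hz2]; exact hRP.support_nodup
    have hdisj := List.disjoint_of_nodup_append hnd'
    have hxt : x ∈ (R.takeUntil z hz2).support := Walk.start_mem_support _
    rw [(R.dropUntil z hz2).support_eq_cons] at hxW
    rcases List.mem_cons.mp hxW with h | h
    · exact hzx h.symm
    · exact hdisj hxt h

/-- Key lemma: every neighbour of a non-cut vertex of a complete block lies in the block. -/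
private lemma nbr_mem_block [Fintype V] {G : SimpleGraph V} (hG : G.Connected)
    {B : Set V} (hB : IsCompleteBlock G B) {u v : V} (hu : u ∈ B) (hv : v ∈ B)
    (huv : u ≠ v) (hucut : ¬ IsCutVertex G u) {y : V} (hy : G.Adj u y) : y ∈ B := by
  classical
  by_cases hyB : y ∈ B
  · exact hyB
  have hyu : y ≠ u := hy.ne'
  have hvu : v ≠ u := huv.symm
  have hconn := conn_del_of_not_cut hG hvu hucut
  have hyc : y ∈ ({u}ᶜ : Set V) := hyu
  have hvc : v ∈ ({u}ᶜ : Set V) := hvu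
  obtain ⟨W0⟩ := hconn.preconnected ⟨y, hyc⟩ ⟨v, hvc⟩
  set P0 := W0.bypass with hP0def
  have hP0 : P0.IsPath := W0.bypass_isPath
  let f : G.induce ({u}ᶜ : Set V) →g G :=
    ⟨Subtype.val, fun h => h⟩
  have hfinj : Function.Injective f := Subtype.val_injective
  set P : G.Walk y v := P0.map f with hPdef
  have hP : P.IsPath := Walk.map_isPath_of_injective hfinj hP0
  have hPnu : ∀ t ∈ P.support, t ≠ u := by
    intro t ht
    rw [hPdef, Walk.support_map, List.mem_map] at ht
    obtain ⟨s, _, rfl⟩ := ht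
    exact s.2
  set S : Set V := B ∪ {t | t ∈ P.support} with hSdef
  have hBS : B ⊆ S := Set.subset_union_left
  have huS : u ∈ S := hBS hu
  have hvS : v ∈ S := hBS hv
  have hyS : y ∈ S := Or.inr P.start_mem_support
  have hPS : ∀ t ∈ P.support, t ∈ S := fun t ht => Or.inr ht
  -- S is 2-connected
  have h2 : IsTwoConnectedGraph (G.induce S) := by
    apply twoConn_of_del
    intro x hxS
    by_cases hxu : x = u
    · -- hub v
      subst hxu
      have hvS' : v ∈ S \ {x} := ⟨hvS, hvu⟩
      apply conn_of_hub hvS'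
      rintro z ⟨hzS, hzx⟩
      have hzx' : z ≠ x := hzx
      rcases hzS with hzB | hzP
      · by_cases hzv : z = v
        · subst hzv; exact Reachable.refl _
        · exact (show (G.induce (S \ {x})).Adj ⟨z, ⟨hBS hzB, hzx'⟩⟩ ⟨v, hvS'⟩ from
            hB.2 z hzB v hv hzv).reachable
      · refine reach_in (P.dropUntil z hzP) ?_ _ _
        intro t ht
        have htP : t ∈ P.support := P.support_dropUntil_subset hzP ht
        exact ⟨hPS t htP, hPnu t htP⟩
    · -- hub u
      have huS' : u ∈ S \ {x} := ⟨huS, fun h => hxu (h.symm ▸ rfl)⟩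
      apply conn_of_hub huS'
      rintro z ⟨hzS, hzx⟩
      have hzx' : z ≠ x := hzx
      by_cases hzu : z = u
      · subst hzu; exact Reachable.refl _
      rcases hzS with hzB | hzP
      · exact (show (G.induce (S \ {x})).Adj ⟨z, ⟨hBS hzB, hzx'⟩⟩ ⟨u, huS'⟩ from
          hB.2 z hzB u hu hzu).reachable
      · -- z on the path; reach an endpoint of P avoiding x, then hop to u
        have hstep : ∃ w0 : V, (G.Adj u w0) ∧
            ∃ (hw0 : w0 ∈ S \ {x}) (hz' : z ∈ S \ {x}),
              (G.induce (S \ {x})).Reachable ⟨z, hz'⟩ ⟨w0, hw0⟩ := by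
          by_cases hxP : x ∈ P.support
          · rcases path_split hP hxP hzP hzx' with ⟨W, hxW, hWP⟩ | ⟨W, hxW, hWP⟩
            · -- W : y → z
              have hmem : ∀ t ∈ W.support, t ∈ S \ {x} := fun t ht =>
                ⟨hPS t (hWP t ht), fun h => hxW (h ▸ ht)⟩
              refine ⟨y, hy, hmem y W.start_mem_support, hmem z W.end_mem_support, ?_⟩
              exact (reach_in W hmem _ _).symm
            · -- W : z → v
              have hmem : ∀ t ∈ W.support, t ∈ S \ {x} := fun t ht =>
                ⟨hPS t (hWP t ht), fun h => hxW (h ▸ ht)⟩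
              refine ⟨v, hB.2 u hu v hv huv, hmem v W.end_mem_support,
                hmem z W.start_mem_support, ?_⟩
              exact reach_in W hmem _ _
          · -- x not on the path at all
            set W := P.dropUntil z hzP with hWdef
            have hWP : ∀ t ∈ W.support, t ∈ P.support := fun t ht =>
              P.support_dropUntil_subset hzP ht
            have hmem : ∀ t ∈ W.support, t ∈ S \ {x} := fun t ht =>
              ⟨hPS t (hWP t ht), fun h => hxP (h ▸ hWP t ht)⟩
            refine ⟨v, hB.2 u hu v hv huv, hmem v W.end_mem_support,
              hmem z W.start_mem_support, ?_⟩
            exact reach_in W hmem _ _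
        obtain ⟨w0, hadj, hw0, hz', hreach⟩ := hstep
        exact hreach.trans (show (G.induce (S \ {x})).Adj ⟨w0, hw0⟩ ⟨u, huS'⟩ from
          hadj.symm).reachable
  have hSB : S = B := hB.1.2 S hBS h2
  rw [hSB] at hyS
  exact absurd hyS hyB

/-- for a complete block `B` of a finite connected graph, a cut vertex
`v ∈ B` and a non-cut vertex `u ∈ B` satisfy `e(u) - 1 ≤ e(v) ≤ e(u)`. -/
theorem stmt_0 [Fintype V] (G : SimpleGraph V) (hG : G.Connected)
    (B : Set V) (hB : IsCompleteBlock G B)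
    (u v : V) (hu : u ∈ B) (hv : v ∈ B)
    (hvcut : IsCutVertex G v) (hucut : ¬ IsCutVertex G u) :
    ecc G u ≤ ecc G v + 1 ∧ ecc G v ≤ ecc G u := by
  classical
  have huv : u ≠ v := by rintro rfl; exact hucut hvcut
  have hadj : G.Adj u v := hB.2 u hu v hv huv
  have hduv : G.dist u v = 1 := dist_eq_one_iff_adj.mpr hadj
  have hecc_le : ∀ a w : V, G.dist a w ≤ ecc G a := fun a w =>
    Finset.le_sup (Finset.mem_univ w)
  constructor
  · apply Finset.sup_le
    intro w _
    have h1 : G.dist u w ≤ G.dist u v + G.dist v w := hG.dist_triangle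
    have h2 : G.dist v w ≤ ecc G v := hecc_le v w
    omega
  · apply Finset.sup_le
    intro w _
    by_cases hle : G.dist v w ≤ G.dist u w
    · exact hle.trans (hecc_le u w)
    push_neg at hle
    by_cases huw : u = w
    · subst huw
      have h1 : G.dist v u = 1 := dist_eq_one_iff_adj.mpr hadj.symm
      have h2 := hecc_le u v
      omega
    have hne : G.dist u w ≠ 0 :=
      dist_ne_zero_iff_ne_and_reachable.mpr ⟨huw, hG.preconnected u w⟩
    obtain ⟨p, hp⟩ := exists_walk_of_dist_ne_zero hne
    cases p with
    | nil => rw [Walk.length_nil] at hp; omega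
    | @cons _ y _ h q =>
      have hyB := nbr_mem_block hG hB hu hv huv hucut h
      have hq : G.dist y w ≤ q.length := dist_le q
      have hlen : q.length + 1 = G.dist u w := by
        simpa [Walk.length_cons, Nat.add_comm] using hp
      have hdvy : G.dist v y ≤ 1 := by
        by_cases hvy : v = y
        · subst hvy; rw [SimpleGraph.dist_self]; omega
        · exact le_of_eq (dist_eq_one_iff_adj.mpr (hB.2 v hv y hyB hvy))
      have htri : G.dist v w ≤ G.dist v y + G.dist y w := hG.dist_triangle
      omega
end

section
/- Let G be a finite connected graph and let v and v' be two distinct cut vertices contained in a complete block B of G. Let x be an eccentric vertex for v (i.e. d(v,x) = e(v)) and let w be the first vertex of B on a shortest path from x to B. Then d(v',x) = e(v) - 1 if w = v', d(v',x) = e(v) if w ∉ {v, v'}, and d(v',x) = e(v) + 1 if w = v. In particular e(v') ≥ d(v',x). -/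
open SimpleGraph

variable {V : Type*}

namespace StmtAux

open SimpleGraph.Walk

variable {G : SimpleGraph V}

/-- First vertex of a walk satisfying a property (given the end satisfies it). -/
lemma aux_exists_first_mem {S : Set V} :
    ∀ {a b : V} (W : G.Walk a b), b ∈ S →
    ∃ b' ∈ S, ∃ W' : G.Walk a b',
      (∀ z ∈ W'.support, z ∈ W.support) ∧
      (∀ z ∈ W'.support, z ∈ S → z = b') ∧ (W.IsPath → W'.IsPath) := by
  classical
  intro a b W
  induction W with
  | nil =>
    intro hb
    exact ⟨_, hb, Walk.nil, by simp, by simp, fun h => h⟩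
  | @cons a c b h w ih =>
    intro hb
    by_cases haS : a ∈ S
    · refine ⟨a, haS, Walk.nil, by simp, ?_, fun _ => IsPath.nil⟩
      intro z hz _
      simpa using hz
    · obtain ⟨b', hb', W', hsub, hfirst, hpath⟩ := ih hb
      refine ⟨b', hb', Walk.cons h W', ?_, ?_, ?_⟩
      · intro z hz
        rw [support_cons] at hz ⊢
        rcases List.mem_cons.mp hz with rfl | hz
        · exact List.mem_cons_self
        · exact List.mem_cons_of_mem _ (hsub z hz)
      · intro z hz hzS
        rw [support_cons] at hz
        rcases List.mem_cons.mp hz with rfl | hz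
        · exact absurd hzS haS
        · exact hfirst z hz hzS
      · intro hcp
        rw [isPath_def, support_cons] at hcp ⊢
        rcases List.nodup_cons.mp hcp with ⟨hanotin, hwnd⟩
        refine List.nodup_cons.mpr ⟨fun hmem => hanotin (hsub a hmem), ?_⟩
        exact (hpath ((isPath_def _).mpr hwnd)).support_nodup

/-- Appending two paths that share only their junction gives a path. -/
lemma aux_isPath_append {a m b : V} {W1 : G.Walk a m} {W2 : G.Walk m b}
    (h1 : W1.IsPath) (h2 : W2.IsPath)
    (h : ∀ z ∈ W1.support, z ∈ W2.support → z = m) : (W1.append W2).IsPath := by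
  rw [isPath_def, support_append]
  refine List.Nodup.append h1.support_nodup (h2.support_nodup.tail) ?_
  intro z hz1 hz2
  have hz2' : z ∈ W2.support := by
    rw [W2.support_eq_cons]; exact List.mem_cons_of_mem _ hz2
  have hzm : z = m := h z hz1 hz2'
  subst hzm
  have := h2.support_nodup
  rw [W2.support_eq_cons] at this
  exact (List.nodup_cons.mp this).1 hz2

/-- In a path, any vertex `z ≠ u` can reach an endpoint avoiding `u`. -/
lemma aux_path_split {a b u z : V} (P : G.Walk a b) (hP : P.IsPath) (hz : z ∈ P.support)
    (hzu : z ≠ u) :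
    (∃ W : G.Walk a z, (∀ t ∈ W.support, t ∈ P.support) ∧ u ∉ W.support) ∨
    (∃ W : G.Walk z b, (∀ t ∈ W.support, t ∈ P.support) ∧ u ∉ W.support) := by
  classical
  by_cases h : u ∈ (P.takeUntil z hz).support
  · right
    refine ⟨P.dropUntil z hz, fun t ht => support_dropUntil_subset _ _ ht, ?_⟩
    intro hu
    have hnd := hP.support_nodup
    rw [← take_spec P hz, support_append] at hnd
    have hdisj := (List.nodup_append'.mp hnd).2.2
    have hu' : u ∈ (P.dropUntil z hz).support.tail := by
      rw [(P.dropUntil z hz).support_eq_cons] at hu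
      rcases List.mem_cons.mp hu with rfl | hu
      · exact absurd rfl hzu
      · exact hu
    exact hdisj h hu'
  · left
    exact ⟨P.takeUntil z hz, fun t ht => support_takeUntil_subset _ _ ht, h⟩

/-- Transfer a walk in `G` whose support avoids `u` and lies in `C` to reachability
in the doubly-induced graph. -/
lemma aux_reach_transfer {C : Set V} {u : ↥C} :
    ∀ {a b : V} (W : G.Walk a b), (∀ z ∈ W.support, z ∈ C ∧ z ≠ ↑u) →
    ∀ (A B' : ↥({u}ᶜ : Set ↥C)), a = ↑↑A → b = ↑↑B' →
    ((G.induce C).induce {u}ᶜ).Reachable A B' := by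
  intro a b W
  induction W with
  | nil =>
    intro _ A B' hA hB'
    have : A = B' := by
      apply Subtype.ext; apply Subtype.ext
      rw [← hA, ← hB']
    rw [this]
  | @cons a c b h w ih =>
    intro hsup A B' hA hB'
    have hc : c ∈ C ∧ c ≠ ↑u := hsup c (by simp)
    have hcmem : (⟨c, hc.1⟩ : ↥C) ∈ ({u}ᶜ : Set ↥C) := by
      simp only [Set.mem_compl_iff, Set.mem_singleton_iff]
      intro hh
      exact hc.2 (congrArg Subtype.val hh)
    have hadj : ((G.induce C).induce {u}ᶜ).Adj A ⟨⟨c, hc.1⟩, hcmem⟩ := by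
      simp only [comap_adj, Function.Embedding.coe_subtype]
      rw [← hA]; exact h
    refine (Adj.reachable hadj).trans ?_
    exact ih (fun z hz => hsup z (by rw [support_cons]; exact List.mem_cons_of_mem _ hz))
      _ B' rfl hB'

/-- Every walk from `x` to a vertex of the complete block `B` passes through `w`,
the unique vertex of `B` on the chosen path from `x` to `B`. -/
lemma aux_key {G : SimpleGraph V} {B : Set V} (hB : IsCompleteBlock G B)
    {x w : V} (hw : w ∈ B)
    (p : G.Walk x w) (hp : p.IsPath)
    (hfirst : ∀ u ∈ p.support, u ∈ B → u = w)
    (b : V) (hb : b ∈ B) (q : G.Walk x b) : w ∈ q.support := by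
  classical
  have hcomp := hB.2
  by_contra hq
  have hxB : x ∉ B := by
    intro hxB
    have hxw := hfirst x p.start_mem_support hxB
    exact hq (hxw ▸ q.start_mem_support)
  obtain ⟨b', hb'B, q₁, hq₁sub, hq₁first, hq₁pathf⟩ :=
    aux_exists_first_mem (S := B) q.bypass hb
  have hq₁path : q₁.IsPath := hq₁pathf q.bypass_isPath
  have hq₁sub' : ∀ z ∈ q₁.support, z ∈ q.support := fun z hz =>
    q.support_bypass_subset (hq₁sub z hz)
  have hwq₁ : w ∉ q₁.support := fun h => hq (hq₁sub' w h)
  have hb'w : b' ≠ w := fun h => hwq₁ (h ▸ q₁.end_mem_support)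
  have hb'p : b' ∉ p.support := fun h => hb'w (hfirst b' h hb'B)
  obtain ⟨y, hy, W1, hW1sub, hW1first, hW1pathf⟩ :=
    aux_exists_first_mem (S := {z | z ∈ q₁.support}) p.reverse q₁.start_mem_support
  have hW1path : W1.IsPath := hW1pathf hp.reverse
  have hyq₁ : y ∈ q₁.support := hy
  have hW1subp : ∀ z ∈ W1.support, z ∈ p.support := fun z hz => by
    have := hW1sub z hz
    rwa [support_reverse, List.mem_reverse] at this
  have hyb' : y ≠ b' := fun h => hb'p (h ▸ hW1subp y W1.end_mem_support)
  have hyB : y ∉ B := fun hyB => hyb' (hq₁first y hyq₁ hyB)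
  have hseg2path : (q₁.dropUntil y hyq₁).IsPath := hq₁path.dropUntil hyq₁
  have hseg2sub : ∀ z ∈ (q₁.dropUntil y hyq₁).support, z ∈ q₁.support := fun z hz =>
    support_dropUntil_subset _ _ hz
  set P : G.Walk w b' := W1.append (q₁.dropUntil y hyq₁) with hPdef
  have hPpath : P.IsPath := aux_isPath_append hW1path hseg2path
    (fun z hz1 hz2 => hW1first z hz1 (hseg2sub z hz2))
  have hPB : ∀ z ∈ P.support, z ∈ B → z = w ∨ z = b' := by
    intro z hz hzB
    rw [hPdef, mem_support_append_iff] at hz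
    rcases hz with hz | hz
    · exact Or.inl (hfirst z (hW1subp z hz) hzB)
    · exact Or.inr (hq₁first z (hseg2sub z hz) hzB)
  have hyP : y ∈ P.support := by
    rw [hPdef, mem_support_append_iff]
    exact Or.inl W1.end_mem_support
  set C : Set V := B ∪ {z | z ∈ P.support} with hC
  have hBC : B ⊆ C := Set.subset_union_left
  have h2conn : IsTwoConnectedGraph (G.induce C) := by
    intro u
    rw [connected_iff_exists_forall_reachable]
    set u₀ : V := (u : V) with hu₀
    have hne_of_mem : ∀ z : ↥({u}ᶜ : Set ↥C), ((z : ↥C) : V) ≠ u₀ := by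
      intro z h
      have h2 := z.2
      simp only [Set.mem_compl_iff, Set.mem_singleton_iff] at h2
      exact h2 (Subtype.ext h)
    obtain ⟨hub₀, hub₀B, hub₀ne⟩ : ∃ h0, h0 ∈ B ∧ h0 ≠ u₀ := by
      by_cases huw : u₀ = w
      · exact ⟨b', hb'B, fun h => hb'w (h.trans huw)⟩
      · exact ⟨w, hw, fun h => huw h.symm⟩
    have hubmem : (⟨hub₀, hBC hub₀B⟩ : ↥C) ∈ ({u}ᶜ : Set ↥C) := by
      simp only [Set.mem_compl_iff, Set.mem_singleton_iff]
      intro hh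
      exact hub₀ne (congrArg Subtype.val hh)
    set hub : ↥({u}ᶜ : Set ↥C) := ⟨⟨hub₀, hBC hub₀B⟩, hubmem⟩ with hhub
    have reachB : ∀ z : ↥({u}ᶜ : Set ↥C), ((z : ↥C) : V) ∈ B →
        ((G.induce C).induce {u}ᶜ).Reachable z hub := by
      intro z hzB
      by_cases hzh : ((z : ↥C) : V) = hub₀
      · have : z = hub := Subtype.ext (Subtype.ext hzh)
        rw [this]
      · refine aux_reach_transfer
          (Walk.cons (hcomp _ hzB _ hub₀B hzh) Walk.nil) ?_ z hub rfl rfl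
        intro t ht
        simp only [support_cons, support_nil, List.mem_cons, List.mem_singleton,
          List.not_mem_nil, or_false] at ht
        rcases ht with rfl | rfl
        · exact ⟨hBC hzB, hne_of_mem z⟩
        · exact ⟨hBC hub₀B, hub₀ne⟩
    have reachHub : ∀ z : ↥({u}ᶜ : Set ↥C),
        ((G.induce C).induce {u}ᶜ).Reachable z hub := by
      intro z
      have hzC : ((z : ↥C) : V) ∈ C := (z : ↥C).2
      rcases hzC with hzB | hzP
      · exact reachB z hzB
      · rcases aux_path_split P hPpath hzP (hne_of_mem z) with
          ⟨W, hWsub, hWu⟩ | ⟨W, hWsub, hWu⟩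
        · -- W : walk from w to z avoiding u₀
          have hwne : w ≠ u₀ := fun h => hWu (h ▸ W.start_mem_support)
          have hwmem : (⟨w, hBC hw⟩ : ↥C) ∈ ({u}ᶜ : Set ↥C) := by
            simp only [Set.mem_compl_iff, Set.mem_singleton_iff]
            intro hh
            exact hwne (congrArg Subtype.val hh)
          have r1 := aux_reach_transfer (u := u) W
            (fun t ht => ⟨Set.mem_union_right _ (hWsub t ht),
              fun h => hWu (by rwa [h] at ht)⟩)
            (⟨⟨w, hBC hw⟩, hwmem⟩ : ↥({u}ᶜ : Set ↥C)) z rfl rfl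
          exact r1.symm.trans (reachB (⟨⟨w, hBC hw⟩, hwmem⟩ : ↥({u}ᶜ : Set ↥C)) hw)
        · -- W : walk from z to b' avoiding u₀
          have hbne : b' ≠ u₀ := fun h => hWu (h ▸ W.end_mem_support)
          have hbmem : (⟨b', hBC hb'B⟩ : ↥C) ∈ ({u}ᶜ : Set ↥C) := by
            simp only [Set.mem_compl_iff, Set.mem_singleton_iff]
            intro hh
            exact hbne (congrArg Subtype.val hh)
          have r1 := aux_reach_transfer (u := u) W
            (fun t ht => ⟨Set.mem_union_right _ (hWsub t ht),
              fun h => hWu (by rwa [h] at ht)⟩)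
            z (⟨⟨b', hBC hb'B⟩, hbmem⟩ : ↥({u}ᶜ : Set ↥C)) rfl rfl
          exact r1.trans (reachB (⟨⟨b', hBC hb'B⟩, hbmem⟩ : ↥({u}ᶜ : Set ↥C)) hb'B)
    exact ⟨hub, fun z => (reachHub z).symm⟩
  have hCB : C = B := hB.1.2 C hBC h2conn
  have : y ∈ C := Set.mem_union_right _ hyP
  rw [hCB] at this
  exact hyB this

end StmtAux

/-- comparing distances from two distinct cut vertices of a complete
block `B` to an eccentric vertex `x` of one of them, in terms of the first vertex
`w` of `B` on a shortest path from `x` to `B`. -/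
theorem stmt_1 [Fintype V] (G : SimpleGraph V) (hG : G.Connected)
    (B : Set V) (hB : IsCompleteBlock G B)
    (v v' : V) (hv : v ∈ B) (hv' : v' ∈ B) (hne : v ≠ v')
    (hvcut : IsCutVertex G v) (hv'cut : IsCutVertex G v')
    (x : V) (hx : G.dist v x = ecc G v)
    (w : V) (hw : w ∈ B)
    (p : G.Walk x w) (hp : p.IsPath) (hmin : p.length = G.dist x w)
    (hfirst : ∀ u ∈ p.support, u ∈ B → u = w) :
    (w = v' → G.dist v' x + 1 = ecc G v) ∧
    (w ≠ v → w ≠ v' → G.dist v' x = ecc G v) ∧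
    (w = v → G.dist v' x = ecc G v + 1) ∧
    G.dist v' x ≤ ecc G v' := by
  classical
  have hcomp := hB.2
  have key : ∀ b ∈ B, ∀ q : G.Walk x b, w ∈ q.support :=
    fun b hb q => StmtAux.aux_key hB hw p hp hfirst b hb q
  have hLdist : G.dist x w = p.length := hmin.symm
  have hdist : ∀ b ∈ B, b ≠ w → G.dist x b = p.length + 1 := by
    intro b hb hbw
    apply le_antisymm
    · have hadj : G.Adj w b := hcomp w hw b hb (Ne.symm hbw)
      have := SimpleGraph.dist_le (p.append (Walk.cons hadj Walk.nil))
      simpa using this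
    · obtain ⟨W, hWlen⟩ := hG.exists_walk_length_eq_dist x b
      have hwW : w ∈ W.support := key b hb W
      have hsplit : W.length =
          (W.takeUntil w hwW).length + (W.dropUntil w hwW).length := by
        conv_lhs => rw [← Walk.take_spec W hwW]
        exact Walk.length_append _ _
      have h1 : p.length ≤ (W.takeUntil w hwW).length :=
        hLdist ▸ SimpleGraph.dist_le _
      have h2 : 1 ≤ (W.dropUntil w hwW).length := by
        have hone : G.dist w b = 1 :=
          SimpleGraph.dist_eq_one_iff_adj.mpr (hcomp w hw b hb (Ne.symm hbw))
        calc 1 = G.dist w b := hone.symm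
          _ ≤ _ := SimpleGraph.dist_le _
      rw [← hWlen, hsplit]
      omega
  have hxv : G.dist x v = ecc G v := by
    rw [SimpleGraph.dist_comm]; exact hx
  refine ⟨?_, ?_, ?_, ?_⟩
  · intro hwv'
    have hvw : v ≠ w := fun h => hne (h.trans hwv')
    have h1 : G.dist v' x = p.length := by
      rw [SimpleGraph.dist_comm, ← hwv', hLdist]
    have h2 : ecc G v = p.length + 1 := by
      rw [← hxv]; exact hdist v hv hvw
    rw [h1, h2]
  · intro hw_v hw_v'
    have h1 : G.dist v' x = p.length + 1 := by
      rw [SimpleGraph.dist_comm]; exact hdist v' hv' (Ne.symm hw_v')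
    have h2 : ecc G v = p.length + 1 := by
      rw [← hxv]; exact hdist v hv (Ne.symm hw_v)
    rw [h1, h2]
  · intro hwv
    have hv'w : v' ≠ w := fun h => hne (hwv.symm.trans h.symm)
    have h1 : G.dist v' x = p.length + 1 := by
      rw [SimpleGraph.dist_comm]; exact hdist v' hv' hv'w
    have h2 : ecc G v = p.length := by
      rw [← hxv, ← hwv, hLdist]
    rw [h1, h2]
  · exact Finset.le_sup (f := G.dist v') (Finset.mem_univ x)
end

section
/- Let G be a finite connected graph whose centre Z(G) is contained in a complete block B of G and is not a single cut vertex. Then Z(G) = B (the centre equals the entire vertex set of that block). -/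
open SimpleGraph

variable {V : Type*}

variable {G : SimpleGraph V}

private lemma walk_reach_induce {S : Set V} {a b : V} (w : G.Walk a b)
    (hw : ∀ z ∈ w.support, z ∈ S) (ha : a ∈ S) (hb : b ∈ S) :
    (G.induce S).Reachable ⟨a, ha⟩ ⟨b, hb⟩ := by
  induction w with
  | nil => exact Reachable.refl _
  | @cons u v c hadj p ih =>
    have hv : v ∈ S := hw v (by simp [Walk.support_cons])
    have h1 : (G.induce S).Adj ⟨u, ha⟩ ⟨v, hv⟩ := hadj
    exact (h1.reachable).trans
      (ih (fun z hz => hw z (by rw [Walk.support_cons]; exact List.mem_cons_of_mem _ hz)) hv hb)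

private lemma induce_conn (G : SimpleGraph V) (S : Set V) (hne : S.Nonempty)
    (h : ∀ a ∈ S, ∀ b ∈ S, ∃ w : G.Walk a b, ∀ z ∈ w.support, z ∈ S) :
    (G.induce S).Connected := by
  rw [connected_iff]
  refine ⟨?_, ⟨⟨hne.choose, hne.choose_spec⟩⟩⟩
  rintro ⟨a, ha⟩ ⟨b, hb⟩
  obtain ⟨w, hw⟩ := h a ha b hb
  exact walk_reach_induce w hw ha hb

private lemma walk_of_induce {S : Set V} {a b : ↥S} (w : (G.induce S).Walk a b) :
    ∃ w' : G.Walk a.1 b.1, ∀ z ∈ w'.support, z ∈ S := by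
  induction w with
  | @nil u => exact ⟨Walk.nil, by rintro z hz; simp at hz; exact hz ▸ u.2⟩
  | @cons u v c hadj p ih =>
    obtain ⟨w', hw'⟩ := ih
    refine ⟨Walk.cons (show G.Adj u.1 v.1 from hadj) w', ?_⟩
    intro z hz
    rw [Walk.support_cons] at hz
    rcases List.mem_cons.mp hz with h | h
    · exact h ▸ u.2
    · exact hw' z h

private lemma first_touch (S : Set V) {a b : V} (p : G.Walk a b) (hb : b ∈ S) :
    ∃ s, s ∈ S ∧ ∃ q : G.Walk a s,
      (∀ z ∈ q.support, z ∈ p.support) ∧ (∀ z ∈ q.support, z ∈ S → z = s) := by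
  classical
  induction p with
  | nil => exact ⟨_, hb, Walk.nil, by simp, fun z hz _ => by simpa using hz⟩
  | @cons u v c hadj p ih =>
    by_cases hu : u ∈ S
    · exact ⟨u, hu, Walk.nil, by simp, fun z hz _ => by simpa using hz⟩
    · obtain ⟨s, hs, q, hq1, hq2⟩ := ih hb
      refine ⟨s, hs, Walk.cons hadj q, ?_, ?_⟩
      · intro z hz
        rw [Walk.support_cons] at hz ⊢
        rcases List.mem_cons.mp hz with h | h
        · exact h ▸ List.mem_cons_self
        · exact List.mem_cons_of_mem _ (hq1 z h)
      · intro z hz hzS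
        rw [Walk.support_cons] at hz
        rcases List.mem_cons.mp hz with h | h
        · exact absurd (h ▸ hzS) hu
        · exact hq2 z h hzS

private lemma shortest_only {u c : V} {B : Set V}
    (hmin : ∀ x ∈ B, G.dist u c ≤ G.dist u x) (p : G.Walk u c)
    (hp : p.length = G.dist u c) : ∀ x ∈ p.support, x ∈ B → x = c := by
  classical
  intro x hx hxB
  have h1 : G.dist u x ≤ (p.takeUntil x hx).length := dist_le _
  have h2 : (p.takeUntil x hx).length + (p.dropUntil x hx).length = p.length := by
    rw [← Walk.length_append, p.take_spec hx]
  have h3 := hmin x hxB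
  have hd : (p.dropUntil x hx).length = 0 := by omega
  exact (Walk.eq_of_length_eq_zero hd)

private def induce_delete_iso (G : SimpleGraph V) (S : Set V) (z : ↥S) :
    ((G.induce S).induce {z}ᶜ) ≃g G.induce (S \ {(z : V)}) where
  toFun := fun w => ⟨w.1.1, w.1.2, fun h => w.2 (Subtype.ext h)⟩
  invFun := fun w => ⟨⟨w.1, w.2.1⟩, fun h => w.2.2 (congrArg Subtype.val h)⟩
  left_inv := fun _ => rfl
  right_inv := fun _ => rfl
  map_rel_iff' := Iff.rfl

private lemma armToB {B : Set V} {x s y : V}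
    (hx : x ∈ B) (hy : y ∈ B)
    (W1 : G.Walk x s) (W2 : G.Walk s y) (hp1 : W1.IsPath)
    (h12 : ∀ z, z ∈ W1.support → z ∈ W2.support → z = s)
    {a z : V} (ha : a ∈ W1.support) (haz : a ≠ z) :
    ∃ t, t ∈ B ∧ t ≠ z ∧ ∃ w : G.Walk a t,
      ∀ c ∈ w.support, (c ∈ B ∨ c ∈ W1.support ∨ c ∈ W2.support) ∧ c ≠ z := by
  classical
  set q1 := W1.takeUntil a ha with hq1def
  set q2 := W1.dropUntil a ha with hq2def
  by_cases hz1 : z ∈ q1.support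
  · -- go forward to s then along W2 to y
    have hnd : W1.support.Nodup := hp1.support_nodup
    have hsupp : W1.support = q1.support ++ q2.support.tail := by
      conv_lhs => rw [← W1.take_spec ha]
      rw [Walk.support_append]
    rw [hsupp] at hnd
    have hdisj := List.disjoint_of_nodup_append hnd
    have hz2 : z ∉ q2.support := by
      intro hz2
      have : z ∈ q2.support.tail := by
        have hcons := q2.support_eq_cons
        rw [hcons] at hz2
        rcases List.mem_cons.mp hz2 with h | h
        · exact absurd h.symm haz
        · exact h
      exact hdisj hz1 this
    have hzs : z ≠ s := fun h => hz2 (h ▸ q2.end_mem_support)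
    have hzW1 : z ∈ W1.support := W1.support_takeUntil_subset ha hz1
    have hzW2 : z ∉ W2.support := fun h => hzs (h12 z hzW1 h)
    refine ⟨y, hy, fun h => hzW2 (h ▸ W2.end_mem_support), ⟨q2.append W2, ?_⟩⟩
    intro c hc
    rw [Walk.support_append] at hc
    rcases List.mem_append.mp hc with h | h
    · have hcW1 : c ∈ W1.support := W1.support_dropUntil_subset ha h
      exact ⟨Or.inr (Or.inl hcW1), fun he => hz2 (he ▸ h)⟩
    · have hcW2 : c ∈ W2.support := List.mem_of_mem_tail h
      exact ⟨Or.inr (Or.inr hcW2), fun he => hzW2 (he ▸ hcW2)⟩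
  · -- go backward to x
    refine ⟨x, hx, fun h => hz1 (h ▸ q1.start_mem_support), ⟨q1.reverse, ?_⟩⟩
    intro c hc
    rw [Walk.support_reverse, List.mem_reverse] at hc
    exact ⟨Or.inr (Or.inl (W1.support_takeUntil_subset ha hc)), fun he => hz1 (he ▸ hc)⟩

private lemma theta {B : Set V} (hB : IsCompleteBlock G B) {x y s : V}
    (hx : x ∈ B) (hy : y ∈ B) (hxy : x ≠ y) (hs : s ∉ B)
    (W1' : G.Walk x s) (W2' : G.Walk s y)
    (h1' : ∀ z ∈ W1'.support, z ∈ B → z = x)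
    (h2' : ∀ z ∈ W2'.support, z ∈ B → z = y)
    (h12' : ∀ z, z ∈ W1'.support → z ∈ W2'.support → z = s) : False := by
  classical
  set W1 := W1'.bypass with hW1def
  set W2 := W2'.bypass with hW2def
  have hp1 : W1.IsPath := W1'.bypass_isPath
  have hp2 : W2.IsPath := W2'.bypass_isPath
  have hsub1 := W1'.support_bypass_subset
  have hsub2 := W2'.support_bypass_subset
  have h1 : ∀ z ∈ W1.support, z ∈ B → z = x := fun z hz => h1' z (hsub1 hz)
  have h2 : ∀ z ∈ W2.support, z ∈ B → z = y := fun z hz => h2' z (hsub2 hz)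
  have h12 : ∀ z, z ∈ W1.support → z ∈ W2.support → z = s :=
    fun z a b => h12' z (hsub1 a) (hsub2 b)
  set C' : Set V := (B ∪ {z | z ∈ W1.support}) ∪ {z | z ∈ W2.support} with hC'def
  have hBC : B ⊆ C' := fun z hz => Or.inl (Or.inl hz)
  have h1C : ∀ z ∈ W1.support, z ∈ C' := fun z hz => Or.inl (Or.inr hz)
  have h2C : ∀ z ∈ W2.support, z ∈ C' := fun z hz => Or.inr hz
  have htwo : IsTwoConnectedGraph (G.induce C') := by
    intro z
    have toB : ∀ a ∈ C' \ {(z : V)}, ∃ t, t ∈ B ∧ t ≠ (z : V) ∧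
        ∃ w : G.Walk a t, ∀ c ∈ w.support, c ∈ C' \ {(z : V)} := by
      rintro a ⟨haC, haz'⟩
      have haz : a ≠ (z : V) := haz'
      rcases haC with (haB | ha1) | ha2
      · exact ⟨a, haB, haz, Walk.nil, by simpa using ⟨hBC haB, haz⟩⟩
      · obtain ⟨t, htB, htz, w, hw⟩ := armToB hx hy W1 W2 hp1 h12 ha1 haz
        refine ⟨t, htB, htz, w, ?_⟩
        intro c hc
        obtain ⟨hcm, hcz⟩ := hw c hc
        refine ⟨?_, hcz⟩
        rcases hcm with h | h | h
        · exact hBC h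
        · exact h1C _ h
        · exact h2C _ h
      · have h12s : ∀ w, w ∈ W2.reverse.support → w ∈ W1.reverse.support → w = s := by
          intro w hw2 hw1
          rw [Walk.support_reverse, List.mem_reverse] at hw1 hw2
          exact h12 w hw1 hw2
        have ha2' : a ∈ W2.reverse.support := by
          rw [Walk.support_reverse, List.mem_reverse]; exact ha2
        obtain ⟨t, htB, htz, w, hw⟩ :=
          armToB hy hx W2.reverse W1.reverse hp2.reverse h12s ha2' haz
        refine ⟨t, htB, htz, w, ?_⟩
        intro c hc
        obtain ⟨hcm, hcz⟩ := hw c hc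
        refine ⟨?_, hcz⟩
        rcases hcm with h | h | h
        · exact hBC h
        · rw [Walk.support_reverse, List.mem_reverse] at h; exact h2C _ h
        · rw [Walk.support_reverse, List.mem_reverse] at h; exact h1C _ h
    have hconn : (G.induce (C' \ {(z : V)})).Connected := by
      apply induce_conn
      · by_cases hxz : x = (z : V)
        · refine ⟨y, hBC hy, ?_⟩
          simp only [Set.mem_singleton_iff]
          rw [← hxz]
          exact fun h => hxy h.symm
        · exact ⟨x, hBC hx, hxz⟩
      · intro a ha b hb
        obtain ⟨t1, ht1B, ht1z, wa, hwa⟩ := toB a ha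
        obtain ⟨t2, ht2B, ht2z, wb, hwb⟩ := toB b hb
        have hmid : ∃ m : G.Walk t1 t2, ∀ c ∈ m.support, c ∈ C' \ {(z : V)} := by
          by_cases he : t1 = t2
          · subst he
            exact ⟨Walk.nil, by simpa using ⟨hBC ht1B, ht1z⟩⟩
          · refine ⟨Walk.cons (hB.2 t1 ht1B t2 ht2B he) Walk.nil, ?_⟩
            intro c hc
            simp only [Walk.support_cons, Walk.support_nil, List.mem_cons,
              List.mem_singleton, List.not_mem_nil, or_false] at hc
            rcases hc with h | h
            · exact h ▸ ⟨hBC ht1B, ht1z⟩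
            · exact h ▸ ⟨hBC ht2B, ht2z⟩
        obtain ⟨m, hm⟩ := hmid
        refine ⟨(wa.append m).append wb.reverse, ?_⟩
        intro c hc
        rw [Walk.support_append] at hc
        rcases List.mem_append.mp hc with h | h
        · rw [Walk.support_append] at h
          rcases List.mem_append.mp h with h' | h'
          · exact hwa c h'
          · exact hm c (List.mem_of_mem_tail h')
        · have : c ∈ wb.reverse.support := List.mem_of_mem_tail h
          rw [Walk.support_reverse, List.mem_reverse] at this
          exact hwb c this
    exact (hconn.map (induce_delete_iso G C' z).symm.toHom
      (induce_delete_iso G C' z).symm.toEquiv.surjective)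
  have hCB := hB.1.2 C' hBC htwo
  have hsC : s ∈ C' := h1C _ W1.end_mem_support
  rw [hCB] at hsC
  exact hs hsC

/-- if the centre of a finite connected graph is contained in a complete
block `B` and is not a single cut vertex, then the centre equals `B`. -/
theorem stmt_2 [Fintype V] (G : SimpleGraph V) (hG : G.Connected)
    (B : Set V) (hB : IsCompleteBlock G B)
    (hsub : graphCenter G ⊆ B)
    (hnotcut : ¬ ∃ v : V, IsCutVertex G v ∧ graphCenter G = {v}) :
    graphCenter G = B := by
  classical
  have hnV : Nonempty V := hG.nonempty
  have huniv : (Finset.univ : Finset V).Nonempty := Finset.univ_nonempty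
  have ecc_ge : ∀ v u : V, G.dist v u ≤ ecc G v :=
    fun v u => Finset.le_sup (Finset.mem_univ u)
  obtain ⟨c₀, _, hc₀min⟩ := Finset.exists_min_image Finset.univ (ecc G) huniv
  have hc₀cen : c₀ ∈ graphCenter G := fun u => hc₀min u (Finset.mem_univ u)
  set r := ecc G c₀ with hrdef
  apply Set.Subset.antisymm hsub
  intro b hbB
  by_contra hbc
  have hbc₀ : b ≠ c₀ := fun h => hbc (h ▸ hc₀cen)
  have hadj : G.Adj b c₀ := hB.2 b hbB c₀ (hsub hc₀cen) hbc₀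
  have hd1 : ∀ p q : V, G.Adj p q → G.dist p q ≤ 1 := by
    intro p q h
    have := dist_le (Walk.cons h Walk.nil)
    simpa using this
  have hub : ecc G b ≤ r + 1 := by
    apply Finset.sup_le
    intro w _
    calc G.dist b w ≤ G.dist b c₀ + G.dist c₀ w := hG.dist_triangle
    _ ≤ 1 + r := by
        have := hd1 b c₀ hadj
        have := ecc_ge c₀ w
        omega
    _ = r + 1 := by omega
  have hlb : r + 1 ≤ ecc G b := by
    have : ¬ ∀ u, ecc G b ≤ ecc G u := hbc
    push_neg at this
    obtain ⟨w, hw⟩ := this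
    have := hc₀min w (Finset.mem_univ w)
    omega
  have heccb : ecc G b = r + 1 := le_antisymm hub hlb
  obtain ⟨u, _, hu⟩ := Finset.exists_mem_eq_sup Finset.univ huniv (G.dist b)
  have hdbu : G.dist b u = r + 1 := by rw [← hu]; exact heccb
  have hubd : ∀ x ∈ B, r ≤ G.dist u x := by
    intro x hxB
    have htri : G.dist b u ≤ G.dist b x + G.dist x u := hG.dist_triangle
    have hbx : G.dist b x ≤ 1 := by
      by_cases he : b = x
      · rw [he, SimpleGraph.dist_self]; omega
      · exact hd1 b x (hB.2 b hbB x hxB he)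
    have hcomm : G.dist u x = G.dist x u := SimpleGraph.dist_comm
    omega
  have hcend : ∀ c ∈ graphCenter G, G.dist u c = r := by
    intro c hc
    have hecc : ecc G c = r := le_antisymm (hc c₀) (hc₀min c (Finset.mem_univ c))
    have h1 : G.dist u c ≤ r := by
      rw [SimpleGraph.dist_comm, ← hecc]; exact ecc_ge c u
    exact le_antisymm h1 (hubd c (hsub hc))
  have hr1 : 1 ≤ r := by
    by_contra h
    have hr0 : r = 0 := by omega
    have : G.dist c₀ b = 0 := by
      have := ecc_ge c₀ b; omega
    exact hbc₀ (hG.dist_eq_zero_iff.mp this).symm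
  have huB : u ∉ B := by
    intro huB
    have : G.dist b u ≤ 1 := by
      by_cases he : b = u
      · rw [he, SimpleGraph.dist_self]; omega
      · exact hd1 b u (hB.2 b hbB u huB he)
    omega
  by_cases hsingle : ∀ c ∈ graphCenter G, c = c₀
  · -- centre is {c₀}; it is not a cut vertex
    have hcenter_eq : graphCenter G = {c₀} := by
      apply Set.eq_singleton_iff_unique_mem.mpr
      exact ⟨hc₀cen, hsingle⟩
    have hnotcut₀ : ¬ IsCutVertex G c₀ := fun h => hnotcut ⟨c₀, h, hcenter_eq⟩
    rw [IsCutVertex, not_or, not_lt] at hnotcut₀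
    obtain ⟨-, hcard⟩ := hnotcut₀
    have hcard1 : Nat.card G.ConnectedComponent = 1 := by
      rw [Nat.card_eq_one_iff_unique]
      constructor
      · constructor
        intro a bb
        exact a.ind₂ (fun p q => ConnectedComponent.sound (hG p q)) bb
      · exact ⟨G.connectedComponentMk b⟩
    have hbne : b ∈ ({c₀}ᶜ : Set V) := hbc₀
    have hune : u ≠ c₀ := by
      intro h
      have := hcend c₀ hc₀cen
      rw [h, SimpleGraph.dist_self] at this
      omega
    have hconn' : (G.induce ({c₀}ᶜ : Set V)).Connected := by
      rw [connected_iff]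
      have hne' : Nonempty (↥({c₀}ᶜ : Set V)) := ⟨⟨b, hbne⟩⟩
      have hle : Nat.card (G.induce ({c₀}ᶜ : Set V)).ConnectedComponent ≤ 1 :=
        hcard.trans (le_of_eq hcard1)
      have hpos : 0 < Nat.card (G.induce ({c₀}ᶜ : Set V)).ConnectedComponent := by
        have : Nonempty (G.induce ({c₀}ᶜ : Set V)).ConnectedComponent :=
          ⟨(G.induce ({c₀}ᶜ : Set V)).connectedComponentMk ⟨b, hbne⟩⟩
        exact Nat.card_pos
      have hone : Nat.card (G.induce ({c₀}ᶜ : Set V)).ConnectedComponent = 1 := by omega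
      obtain ⟨hss, -⟩ := Nat.card_eq_one_iff_unique.mp hone
      exact ⟨fun p q => (ConnectedComponent.eq).mp (hss.allEq _ _), hne'⟩
    -- walk from b to u avoiding c₀
    have hreach := hconn'.preconnected ⟨b, hbne⟩ ⟨u, hune⟩
    obtain ⟨w0⟩ := hreach
    obtain ⟨R, hR⟩ := walk_of_induce w0
    -- R : G.Walk b u, support avoids c₀
    obtain ⟨x, hxB2, R', hR'sub, hR'B⟩ := first_touch B R.reverse hbB
    have hR'avoid : ∀ z ∈ R'.support, z ≠ c₀ := by
      intro z hz h
      have := hR'sub z hz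
      rw [Walk.support_reverse, List.mem_reverse] at this
      exact (hR z this) h
    have hxc₀ : x ≠ c₀ := hR'avoid x R'.end_mem_support
    obtain ⟨P, hP⟩ := (hG u c₀).exists_walk_length_eq_dist
    have hminP : ∀ t ∈ B, G.dist u c₀ ≤ G.dist u t := by
      intro t ht
      rw [hcend c₀ hc₀cen]
      exact hubd t ht
    have hPonly : ∀ t ∈ P.support, t ∈ B → t = c₀ := shortest_only hminP P hP
    obtain ⟨s, hsP, T, hTsub, hTfirst⟩ :=
      first_touch {t | t ∈ P.support} R'.reverse (P.start_mem_support)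
    have hTsub' : ∀ t ∈ T.support, t ∈ R'.support := by
      intro t ht
      have := hTsub t ht
      rwa [Walk.support_reverse, List.mem_reverse] at this
    have hsB : s ∉ B := by
      intro hsB'
      have h1 : s = x := hR'B s (hTsub' s T.end_mem_support) hsB'
      have h2 : s = c₀ := hPonly s hsP hsB'
      exact hxc₀ (h1 ▸ h2)
    refine theta hB hxB2 (hsub hc₀cen) hxc₀ hsB T (P.dropUntil s hsP) ?_ ?_ ?_
    · intro t ht htB
      exact hR'B t (hTsub' t ht) htB
    · intro t ht htB
      exact hPonly t (P.support_dropUntil_subset hsP ht) htB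
    · intro t ht1 ht2
      exact hTfirst t ht1 (P.support_dropUntil_subset hsP ht2)
  · -- two distinct centre vertices
    push_neg at hsingle
    obtain ⟨c₁, hc₁cen, hc₁ne⟩ := hsingle
    obtain ⟨P, hP⟩ := (hG u c₀).exists_walk_length_eq_dist
    obtain ⟨Q, hQ⟩ := (hG u c₁).exists_walk_length_eq_dist
    have hminP : ∀ t ∈ B, G.dist u c₀ ≤ G.dist u t := by
      intro t ht; rw [hcend c₀ hc₀cen]; exact hubd t ht
    have hminQ : ∀ t ∈ B, G.dist u c₁ ≤ G.dist u t := by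
      intro t ht; rw [hcend c₁ hc₁cen]; exact hubd t ht
    have hPonly : ∀ t ∈ P.support, t ∈ B → t = c₀ := shortest_only hminP P hP
    have hQonly : ∀ t ∈ Q.support, t ∈ B → t = c₁ := shortest_only hminQ Q hQ
    obtain ⟨s, hsQ, T, hTsub, hTfirst⟩ :=
      first_touch {t | t ∈ Q.support} P.reverse (Q.start_mem_support)
    have hTsub' : ∀ t ∈ T.support, t ∈ P.support := by
      intro t ht
      have := hTsub t ht
      rwa [Walk.support_reverse, List.mem_reverse] at this
    have hsB : s ∉ B := by
      intro hsB'
      have h1 : s = c₀ := hPonly s (hTsub' s T.end_mem_support) hsB'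
      have h2 : s = c₁ := hQonly s hsQ hsB'
      exact hc₁ne (h2 ▸ h1 ▸ rfl : c₁ = c₀)
    refine theta hB (hsub hc₀cen) (hsub hc₁cen) (fun h => hc₁ne h.symm) hsB
      T (Q.dropUntil s hsQ) ?_ ?_ ?_
    · intro t ht htB
      exact hPonly t (hTsub' t ht) htB
    · intro t ht htB
      exact hQonly t (Q.support_dropUntil_subset hsQ ht) htB
    · intro t ht1 ht2
      exact hTfirst t ht1 (Q.support_dropUntil_subset hsQ ht2)
end

section
/- Let G be a finite graph, B a complete block of G, and x a vertex of G not in B. Then there exists a vertex w ∈ B such that every shortest path from x to any vertex b ∈ B passes through w; in particular d(b,x) = d(b,w) + d(w,x) for all b ∈ B. -/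
open SimpleGraph

variable {V : Type*}

namespace StmtSevenAux

variable {G : SimpleGraph V}

private lemma dist_triangle' {u z v : V} (r1 : G.Reachable u z) (r2 : G.Reachable z v) :
    G.dist u v ≤ G.dist u z + G.dist z v := by
  obtain ⟨q1, hq1⟩ := r1.exists_walk_length_eq_dist
  obtain ⟨q2, hq2⟩ := r2.exists_walk_length_eq_dist
  calc G.dist u v ≤ (q1.append q2).length := dist_le _
    _ = _ := by rw [Walk.length_append, hq1, hq2]

private lemma geo_take [DecidableEq V] {u v z : V} (p : G.Walk u v)
    (hp : p.length = G.dist u v) (hz : z ∈ p.support) :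
    (p.takeUntil z hz).length = G.dist u z ∧ (p.dropUntil z hz).length = G.dist z v ∧
      G.dist u z + G.dist z v = G.dist u v := by
  have hlen : (p.takeUntil z hz).length + (p.dropUntil z hz).length = p.length := by
    rw [← Walk.length_append, p.take_spec hz]
  have h1 := dist_le (p.takeUntil z hz)
  have h2 := dist_le (p.dropUntil z hz)
  have h3 := dist_triangle' (G := G) ⟨p.takeUntil z hz⟩ ⟨p.dropUntil z hz⟩
  omega

private lemma geo_inj [DecidableEq V] {a c z z' : V} (p : G.Walk a c)
    (hp : p.length = G.dist a c) (hz : z ∈ p.support) (hz' : z' ∈ p.support)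
    (hd : G.dist a z = G.dist a z') : z = z' := by
  have hsplit : z' ∈ (p.takeUntil z hz).support ∨ z' ∈ (p.dropUntil z hz).support := by
    rw [← Walk.mem_support_append_iff, p.take_spec hz]; exact hz'
  have h1 := geo_take p hp hz
  rcases hsplit with h | h
  · have h2 := geo_take (p.takeUntil z hz) h1.1 h
    have hzz : G.dist z' z = 0 := by omega
    have r : G.Reachable z' z := ⟨(p.takeUntil z hz).dropUntil z' h⟩
    exact (r.dist_eq_zero_iff.mp hzz).symm
  · have h2 := geo_take (p.dropUntil z hz) h1.2.1 h
    have h3 := geo_take p hp hz'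
    have hzz : G.dist z z' = 0 := by omega
    have r : G.Reachable z z' := ⟨(p.dropUntil z hz).takeUntil z' h⟩
    exact r.dist_eq_zero_iff.mp hzz

private lemma geo_drop_coord [DecidableEq V] {a c z u : V} (p : G.Walk a c)
    (hp : p.length = G.dist a c) (hz : z ∈ p.support)
    (hu : u ∈ (p.dropUntil z hz).support) : G.dist a z ≤ G.dist a u := by
  have h1 := geo_take p hp hz
  have h2 := geo_take (p.dropUntil z hz) h1.2.1 hu
  have h3 := geo_take p hp ((Walk.support_dropUntil_subset _ _) hu)
  omega

private lemma geo_take_coord [DecidableEq V] {a c z u : V} (p : G.Walk a c)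
    (hp : p.length = G.dist a c) (hz : z ∈ p.support)
    (hu : u ∈ (p.takeUntil z hz).support) : G.dist a u ≤ G.dist a z := by
  have h1 := geo_take p hp hz
  have h2 := geo_take (p.takeUntil z hz) h1.1 hu
  omega

private lemma transport (C : Set V) (v : ↑C) {a b : V} (p : G.Walk a b)
    (hp : ∀ z ∈ p.support, z ∈ C ∧ z ≠ (v : V)) :
    ∃ (ha : a ∈ C) (hb : b ∈ C) (ha' : (⟨a, ha⟩ : ↑C) ∈ ({v}ᶜ : Set ↑C))
      (hb' : (⟨b, hb⟩ : ↑C) ∈ ({v}ᶜ : Set ↑C)),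
      ((G.induce C).induce ({v}ᶜ : Set ↑C)).Reachable ⟨⟨a, ha⟩, ha'⟩ ⟨⟨b, hb⟩, hb'⟩ := by
  induction p with
  | nil =>
    obtain ⟨ha, hav⟩ := hp _ (Walk.start_mem_support _)
    exact ⟨ha, ha, fun h => hav (congrArg Subtype.val h),
      fun h => hav (congrArg Subtype.val h), Reachable.refl _⟩
  | @cons u c b h q ih =>
    obtain ⟨hu, huv⟩ := hp _ (Walk.start_mem_support _)
    have hp' : ∀ z ∈ q.support, z ∈ C ∧ z ≠ (v : V) := fun z hz => hp z (by simp [hz])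
    obtain ⟨hc, hb, hc', hb', hr⟩ := ih hp'
    have hu' : (⟨u, hu⟩ : ↑C) ∈ ({v}ᶜ : Set ↑C) := fun hh => huv (congrArg Subtype.val hh)
    refine ⟨hu, hb, hu', hb', ?_⟩
    have hadj : ((G.induce C).induce ({v}ᶜ : Set ↑C)).Adj ⟨⟨u, hu⟩, hu'⟩ ⟨⟨c, hc⟩, hc'⟩ := h
    exact hadj.reachable.trans hr

private lemma connected_nested (C : Set V) (v : ↑C) (hub : V)
    (hubC : hub ∈ C) (hubv : hub ≠ (v : V))
    (h : ∀ z ∈ C, z ≠ (v : V) → ∃ q : G.Walk z hub, ∀ u ∈ q.support, u ∈ C ∧ u ≠ (v : V)) :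
    ((G.induce C).induce ({v}ᶜ : Set ↑C)).Connected := by
  have hubv' : (⟨hub, hubC⟩ : ↑C) ∈ ({v}ᶜ : Set ↑C) := fun hh => hubv (congrArg Subtype.val hh)
  rw [connected_iff]
  constructor
  · rintro ⟨⟨a, haC⟩, ha⟩ ⟨⟨c, hcC⟩, hc⟩
    have hav : a ≠ (v : V) := fun hh => ha (Subtype.ext hh)
    have hcv : c ≠ (v : V) := fun hh => hc (Subtype.ext hh)
    obtain ⟨qa, hqa⟩ := h a haC hav
    obtain ⟨qc, hqc⟩ := h c hcC hcv
    obtain ⟨_, _, _, _, ra⟩ := transport C v qa hqa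
    obtain ⟨_, _, _, _, rc⟩ := transport C v qc hqc
    exact ra.trans rc.symm
  · exact ⟨⟨⟨hub, hubC⟩, hubv'⟩⟩

private lemma gate_mem [DecidableEq V] {B : Set V}
    (hB : IsCompleteBlock G B)
    {x w : V} (hwB : w ∈ B) (hmin : ∀ z ∈ B, G.dist x w ≤ G.dist x z)
    (hxw : G.Reachable x w)
    {b : V} (hbB : b ∈ B) (p : G.Walk x b) (hp : p.length = G.dist x b) :
    w ∈ p.support := by
  by_contra hw
  have hbw : b ≠ w := fun h => hw (h ▸ p.end_mem_support)
  obtain ⟨P₁, hP₁⟩ := hxw.exists_walk_length_eq_dist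
  have hxmem : x ∈ P₁.support.toFinset ∩ p.support.toFinset := by
    simp [Walk.start_mem_support]
  obtain ⟨y, hyF, hymax⟩ :=
    Finset.exists_max_image (P₁.support.toFinset ∩ p.support.toFinset) (G.dist x) ⟨x, hxmem⟩
  rw [Finset.mem_inter, List.mem_toFinset, List.mem_toFinset] at hyF
  obtain ⟨hy₁, hy₂⟩ := hyF
  have hyw : y ≠ w := fun h => hw (h ▸ hy₂)
  obtain ⟨hT₁, hD₁, hS₁⟩ := geo_take P₁ hP₁ hy₁
  obtain ⟨hT₂, hD₂, hS₂⟩ := geo_take p hp hy₂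
  set Q₁ := P₁.dropUntil y hy₁ with hQ₁def
  set Q₂ := p.dropUntil y hy₂ with hQ₂def
  have hQ₁sub : Q₁.support ⊆ P₁.support := Walk.support_dropUntil_subset _ _
  have hQ₂sub : Q₂.support ⊆ p.support := Walk.support_dropUntil_subset _ _
  have hdyw_pos : 0 < G.dist y w := (Reachable.pos_dist_of_ne ⟨Q₁⟩ hyw)
  have hynB : y ∉ B := fun h => by have := hmin y h; omega
  -- intersection of the two branch supports is {y}
  have hint : ∀ z, z ∈ Q₁.support → z ∈ Q₂.support → z = y := by
    intro z h1 h2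
    have hzmax : G.dist x z ≤ G.dist x y := hymax z
      (Finset.mem_inter.mpr ⟨List.mem_toFinset.mpr (hQ₁sub h1), List.mem_toFinset.mpr (hQ₂sub h2)⟩)
    have hc1 := (geo_take Q₁ hD₁ h1).2.2
    have hc2 := (geo_take P₁ hP₁ (hQ₁sub h1)).2.2
    have hzy : G.dist y z = 0 := by omega
    exact ((Reachable.dist_eq_zero_iff ⟨Q₁.takeUntil z h1⟩).mp hzy).symm
  set C : Set V := (B ∪ {z | z ∈ Q₁.support}) ∪ {z | z ∈ Q₂.support} with hC
  have hBC : B ⊆ C := fun z hz => Or.inl (Or.inl hz)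
  have hQ₁C : ∀ z ∈ Q₁.support, z ∈ C := fun z hz => Or.inl (Or.inr hz)
  have hQ₂C : ∀ z ∈ Q₂.support, z ∈ C := fun z hz => Or.inr hz
  have h2conn : IsTwoConnectedGraph (G.induce C) := by
    intro v
    have hS' : ∀ z ∈ C, z ≠ (v : V) →
        ∃ c, c ∈ B ∧ ∃ q : G.Walk z c, ∀ u ∈ q.support, u ∈ C ∧ u ≠ (v : V) := by
      intro z hzC hzv
      rcases hzC with (hzB | hzQ₁) | hzQ₂
      · refine ⟨z, hzB, Walk.nil, ?_⟩
        intro u hu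
        rw [Walk.support_nil, List.mem_singleton] at hu
        subst hu
        exact ⟨hBC hzB, hzv⟩
      · -- z on the branch towards w
        by_cases hv1 : (v : V) ∈ Q₁.support
        · rcases lt_trichotomy (G.dist y (v : V)) (G.dist y z) with hlt | heq | hgt
          · refine ⟨w, hwB, Q₁.dropUntil z hzQ₁, ?_⟩
            intro u hu
            have huQ : u ∈ Q₁.support := Walk.support_dropUntil_subset _ _ hu
            refine ⟨hQ₁C u huQ, fun huv => ?_⟩
            subst huv
            exact absurd (geo_drop_coord Q₁ hD₁ hzQ₁ hu) (by omega)
          · exact absurd (geo_inj Q₁ hD₁ hv1 hzQ₁ heq) (Ne.symm hzv)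
          · refine ⟨b, hbB, (Q₁.takeUntil z hzQ₁).reverse.append Q₂, ?_⟩
            intro u hu
            rw [Walk.mem_support_append_iff, Walk.support_reverse, List.mem_reverse] at hu
            rcases hu with hu | hu
            · refine ⟨hQ₁C u (Walk.support_takeUntil_subset _ _ hu), fun huv => ?_⟩
              subst huv
              exact absurd (geo_take_coord Q₁ hD₁ hzQ₁ hu) (by omega)
            · refine ⟨hQ₂C u hu, fun huv => ?_⟩
              subst huv
              have hvy := hint _ hv1 hu
              rw [hvy, dist_self] at hgt
              omega
        · refine ⟨w, hwB, Q₁.dropUntil z hzQ₁, ?_⟩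
          intro u hu
          have huQ : u ∈ Q₁.support := Walk.support_dropUntil_subset _ _ hu
          exact ⟨hQ₁C u huQ, fun huv => hv1 (huv ▸ huQ)⟩
      · -- z on the branch towards b
        by_cases hv2 : (v : V) ∈ Q₂.support
        · rcases lt_trichotomy (G.dist y (v : V)) (G.dist y z) with hlt | heq | hgt
          · refine ⟨b, hbB, Q₂.dropUntil z hzQ₂, ?_⟩
            intro u hu
            have huQ : u ∈ Q₂.support := Walk.support_dropUntil_subset _ _ hu
            refine ⟨hQ₂C u huQ, fun huv => ?_⟩
            subst huv
            exact absurd (geo_drop_coord Q₂ hD₂ hzQ₂ hu) (by omega)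
          · exact absurd (geo_inj Q₂ hD₂ hv2 hzQ₂ heq) (Ne.symm hzv)
          · refine ⟨w, hwB, (Q₂.takeUntil z hzQ₂).reverse.append Q₁, ?_⟩
            intro u hu
            rw [Walk.mem_support_append_iff, Walk.support_reverse, List.mem_reverse] at hu
            rcases hu with hu | hu
            · refine ⟨hQ₂C u (Walk.support_takeUntil_subset _ _ hu), fun huv => ?_⟩
              subst huv
              exact absurd (geo_take_coord Q₂ hD₂ hzQ₂ hu) (by omega)
            · refine ⟨hQ₁C u hu, fun huv => ?_⟩
              subst huv
              have hvy := hint _ hu hv2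
              rw [hvy, dist_self] at hgt
              omega
        · refine ⟨b, hbB, Q₂.dropUntil z hzQ₂, ?_⟩
          intro u hu
          have huQ : u ∈ Q₂.support := Walk.support_dropUntil_subset _ _ hu
          exact ⟨hQ₂C u huQ, fun huv => hv2 (huv ▸ huQ)⟩
    -- choose the hub
    set hub : V := if (v : V) = w then b else w with hhub
    have hhubB : hub ∈ B := by
      rw [hhub]; split <;> assumption
    have hhubv : hub ≠ (v : V) := by
      rw [hhub]; split
      · next hh => rw [hh]; exact hbw
      · next hh => exact fun h => hh h.symm
    apply connected_nested C v hub (hBC hhubB) hhubv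
    intro z hzC hzv
    obtain ⟨c, hcB, q, hq⟩ := hS' z hzC hzv
    by_cases hch : c = hub
    · subst hch; exact ⟨q, hq⟩
    · refine ⟨q.append (hB.2 c hcB hub hhubB hch).toWalk, ?_⟩
      intro u hu
      rw [Walk.mem_support_append_iff] at hu
      rcases hu with hu | hu
      · exact hq u hu
      · have : u = c ∨ u = hub := by simpa [SimpleGraph.Adj.toWalk] using hu
        rcases this with h | h
        · rw [h]; exact hq c q.end_mem_support
        · rw [h]; exact ⟨hBC hhubB, hhubv⟩
  have hCB := hB.1.2 C hBC h2conn
  exact hynB (hCB ▸ hQ₁C y Q₁.start_mem_support)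

end StmtSevenAux

/-- for a complete block `B` and a vertex `x ∉ B` in the same
connected component as `B`, there is a gate `w ∈ B`: every shortest path from
`x` to a vertex of `B` passes through `w`, and distances split accordingly. -/
theorem stmt_7 [Fintype V] (G : SimpleGraph V)
    (B : Set V) (hB : IsCompleteBlock G B)
    (x : V) (hx : x ∉ B) (hreach : ∃ b ∈ B, G.Reachable x b) :
    ∃ w ∈ B,
      (∀ b ∈ B, ∀ p : G.Walk x b, p.length = G.dist x b → w ∈ p.support) ∧
      ∀ b ∈ B, G.dist b x = G.dist b w + G.dist w x := by
  classical
  obtain ⟨b₀, hb₀B, hxb₀⟩ := hreach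
  obtain ⟨w, hwF, hwmin⟩ :=
    Finset.exists_min_image (Finset.univ.filter (· ∈ B)) (G.dist x) ⟨b₀, by simp [hb₀B]⟩
  rw [Finset.mem_filter] at hwF
  have hwB : w ∈ B := hwF.2
  have hmin : ∀ z ∈ B, G.dist x w ≤ G.dist x z := fun z hz => hwmin z (by simp [hz])
  have hxw : G.Reachable x w := by
    by_cases h : b₀ = w
    · exact h ▸ hxb₀
    · exact hxb₀.trans (hB.2 b₀ hb₀B w hwB h).reachable
  refine ⟨w, hwB, fun b hbB p hp => StmtSevenAux.gate_mem hB hwB hmin hxw hbB p hp, ?_⟩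
  intro b hbB
  by_cases hbw : b = w
  · subst hbw; simp
  · have hxb : G.Reachable x b := hxw.trans (hB.2 w hwB b hbB (Ne.symm hbw)).reachable
    obtain ⟨p, hp⟩ := hxb.exists_walk_length_eq_dist
    have hwp : w ∈ p.support := StmtSevenAux.gate_mem hB hwB hmin hxw hbB p hp
    have hsplit := (StmtSevenAux.geo_take p hp hwp).2.2
    have h1 := dist_comm (G := G) (u := b) (v := x)
    have h2 := dist_comm (G := G) (u := b) (v := w)
    have h3 := dist_comm (G := G) (u := w) (v := x)
    omega
end

section
/- Let G be a finite graph and U = (u_{xa}) a magic unitary indexed by V(G) × V(G) with coefficients in a unital C*-algebra, commuting with the adjacency matrix of G. If u_{xa} u_{yb} ≠ 0 for vertices x, y, a, b, then d_G(x,y) = d_G(a,b), where d_G is the graph distance (with d_G(x,y) = ∞ if x and y are in different components). -/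
/-- A magic unitary over a unital *-algebra: a matrix of self-adjoint idempotents
in which entries in a common row or column are orthogonal and every row and every
column sums to 1. -/
def IsMagicUnitary {I J A : Type*} [Fintype I] [Fintype J] [Ring A] [StarRing A]
    (U : Matrix I J A) : Prop :=
  (∀ i j, U i j * U i j = U i j) ∧
  (∀ i j, star (U i j) = U i j) ∧
  (∀ i j k, j ≠ k → U i j * U i k = 0) ∧
  (∀ i j k, i ≠ k → U i j * U k j = 0) ∧
  (∀ j, ∑ i, U i j = 1) ∧
  (∀ i, ∑ j, U i j = 1)

private lemma aux1 {A : Type*} [Ring A] (p q : A) (k : ℕ) (hp : p * p = p) :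
    p * (p * (k : A)) * q = (k : A) * (p * q) := by
  rw [← mul_assoc p p, hp, ← (Nat.cast_commute k p).eq, mul_assoc]

private lemma aux2 {A : Type*} [Ring A] (p q : A) (k : ℕ) (hq : q * q = q) :
    p * ((k : A) * q) * q = (k : A) * (p * q) := by
  rw [← mul_assoc p (k : A) q, mul_assoc (p * (k : A)) q q, hq,
    ← (Nat.cast_commute k p).eq, mul_assoc]

/-- Fulton's lemma: if a magic unitary over a unital C*-algebra
commutes with the adjacency matrix of a finite graph `G` and `u_{xa} u_{yb} ≠ 0`,
then `d_G(x,y) = d_G(a,b)` (extended graph distance, `∞` across components). -/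
theorem stmt_10 {V A : Type*} [Fintype V] [CStarAlgebra A]
    (G : SimpleGraph V) [DecidableRel G.Adj]
    (U : Matrix V V A) (hU : IsMagicUnitary U)
    (hcomm : U * G.adjMatrix A = G.adjMatrix A * U)
    (x y a b : V) (h : U x a * U y b ≠ 0) :
    G.edist x y = G.edist a b := by
  classical
  obtain ⟨hidem, hsa, hrow, hcol, hcolsum, hrowsum⟩ := hU
  have hpow : ∀ n : ℕ, U * G.adjMatrix A ^ n = G.adjMatrix A ^ n * U :=
    fun n => (Commute.pow_right hcomm n)
  have key : ∀ n : ℕ,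
      ((Fintype.card {p : G.Walk a b | p.length = n} : A)) * (U x a * U y b)
        = ((Fintype.card {p : G.Walk x y | p.length = n} : A)) * (U x a * U y b) := by
    intro n
    have hentry : (U * G.adjMatrix A ^ n) x b = (G.adjMatrix A ^ n * U) x b := by
      rw [hpow n]
    have hL : U x a * ((U * G.adjMatrix A ^ n) x b) * U y b
        = ((Fintype.card {p : G.Walk a b | p.length = n} : A)) * (U x a * U y b) := by
      rw [Matrix.mul_apply, Finset.mul_sum, Finset.sum_mul,
        Finset.sum_eq_single a]
      · rw [G.adjMatrix_pow_apply_eq_card_walk]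
        exact aux1 (U x a) (U y b) _ (hidem x a)
      · intro c _ hc
        simp [← mul_assoc, hrow x a c (Ne.symm hc)]
      · intro hmem; exact absurd (Finset.mem_univ a) hmem
    have hR : U x a * ((G.adjMatrix A ^ n * U) x b) * U y b
        = ((Fintype.card {p : G.Walk x y | p.length = n} : A)) * (U x a * U y b) := by
      rw [Matrix.mul_apply, Finset.mul_sum, Finset.sum_mul,
        Finset.sum_eq_single y]
      · rw [G.adjMatrix_pow_apply_eq_card_walk]
        exact aux2 (U x a) (U y b) _ (hidem y b)
      · intro c _ hc
        simp [mul_assoc, hcol c b y hc]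
      · intro hmem; exact absurd (Finset.mem_univ y) hmem
    rw [← hL, ← hR, hentry]
  have hcard : ∀ n : ℕ,
      Fintype.card {p : G.Walk a b | p.length = n}
        = Fintype.card {p : G.Walk x y | p.length = n} := by
    intro n
    by_contra hne
    apply h
    have h1 : (Fintype.card {p : G.Walk a b | p.length = n} : ℂ) •
        (U x a * U y b) = (Fintype.card {p : G.Walk x y | p.length = n} : ℂ) •
        (U x a * U y b) := by
      rw [Nat.cast_smul_eq_nsmul, Nat.cast_smul_eq_nsmul, nsmul_eq_mul,
        nsmul_eq_mul, key n]
    have h2 := sub_eq_zero.mpr h1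
    rw [← sub_smul] at h2
    rcases smul_eq_zero.mp h2 with h3 | h3
    · exact absurd (Nat.cast_injective (sub_eq_zero.mp h3)) hne
    · exact h3
  have hiff : ∀ n : ℕ, (∃ p : G.Walk x y, p.length = n) ↔
      (∃ p : G.Walk a b, p.length = n) := by
    intro n
    constructor
    · rintro ⟨p, hp⟩
      have hpos : 0 < Fintype.card {p : G.Walk x y | p.length = n} :=
        Fintype.card_pos_iff.mpr ⟨⟨p, hp⟩⟩
      rw [← hcard n] at hpos
      obtain ⟨⟨q, hq⟩⟩ := Fintype.card_pos_iff.mp hpos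
      exact ⟨q, hq⟩
    · rintro ⟨p, hp⟩
      have hpos : 0 < Fintype.card {p : G.Walk a b | p.length = n} :=
        Fintype.card_pos_iff.mpr ⟨⟨p, hp⟩⟩
      rw [hcard n] at hpos
      obtain ⟨⟨q, hq⟩⟩ := Fintype.card_pos_iff.mp hpos
      exact ⟨q, hq⟩
  have hle : ∀ (x y a b : V),
      (∀ n : ℕ, (∃ p : G.Walk x y, p.length = n) → (∃ p : G.Walk a b, p.length = n)) →
      G.edist a b ≤ G.edist x y := by
    intro x y a b hmono
    by_cases hr : G.Reachable x y
    · obtain ⟨p, hp⟩ := hr.exists_walk_length_eq_edist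
      obtain ⟨q, hq⟩ := hmono p.length ⟨p, rfl⟩
      calc G.edist a b ≤ q.length := G.edist_le q
        _ = (p.length : ℕ∞) := by rw [hq]
        _ = G.edist x y := hp
    · rw [G.edist_eq_top_of_not_reachable hr]; exact le_top
  exact le_antisymm (hle a b x y (fun n => (hiff n).mpr)) (hle x y a b (fun n => (hiff n).mp))
end

section
/- Let G and H be finite graphs, P a partition of V(G) into the vertex sets of the connected components of G, and Q the analogous partition for H. Any quantum isomorphism U from G to H (a magic unitary over a unital C*-algebra indexed by V(H) × V(G) with U·Adj(G) = Adj(H)·U) automatically preserves the partitions: if u_{ax} u_{by} ≠ 0 with x, y in the same component of G, then a, b lie in the same component of H, and conversely. -/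
lemma rect_mul_adjMatrix {V W A : Type*} [Fintype V] [Fintype W] [NonAssocSemiring A]
    (G : SimpleGraph V) [DecidableRel G.Adj] (M : Matrix W V A) (i : W) (v : V) :
    (M * G.adjMatrix A) i v = ∑ u ∈ G.neighborFinset v, M i u := by
  simp [Matrix.mul_apply, SimpleGraph.neighborFinset_eq_filter, Finset.sum_filter,
    SimpleGraph.adj_comm]

lemma rect_adjMatrix_mul {V W A : Type*} [Fintype V] [Fintype W] [NonAssocSemiring A]
    (G : SimpleGraph V) [DecidableRel G.Adj] (M : Matrix V W A) (v : V) (j : W) :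
    (G.adjMatrix A * M) v j = ∑ u ∈ G.neighborFinset v, M u j := by
  simp [Matrix.mul_apply, SimpleGraph.neighborFinset_eq_filter, Finset.sum_filter]

lemma magic_adj {VG VH A : Type*} [Fintype VG] [Fintype VH] [Ring A] [StarRing A]
    (G : SimpleGraph VG) [DecidableRel G.Adj]
    (H : SimpleGraph VH) [DecidableRel H.Adj]
    (U : Matrix VH VG A) (hU : IsMagicUnitary U)
    (hcomm : U * G.adjMatrix A = H.adjMatrix A * U)
    (a b : VH) (x y : VG) (h : U a x * U b y ≠ 0) (hxy : G.Adj x y) :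
    H.Adj a b := by
  by_contra hab
  apply h
  obtain ⟨hidem, -, hrow, hcol, -, -⟩ := hU
  have hent := congrFun (congrFun hcomm a) y
  rw [rect_mul_adjMatrix, rect_adjMatrix_mul] at hent
  have h1 : U a x * (∑ z ∈ G.neighborFinset y, U a z) = U a x := by
    rw [Finset.mul_sum, Finset.sum_eq_single_of_mem x (by simpa using hxy.symm)
      (fun z _ hne => hrow a x z hne.symm), hidem a x]
  have h2 : (∑ c ∈ H.neighborFinset a, U c y) * U b y = 0 := by
    rw [Finset.sum_mul]
    refine Finset.sum_eq_zero fun c hc => ?_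
    exact hcol c y b (by rintro rfl; exact hab (by simpa using hc))
  calc U a x * U b y = U a x * (∑ z ∈ G.neighborFinset y, U a z) * U b y := by rw [h1]
    _ = U a x * ((∑ c ∈ H.neighborFinset a, U c y) * U b y) := by rw [mul_assoc, hent]
    _ = 0 := by rw [h2, mul_zero]

lemma magic_walk {VG VH A : Type*} [Fintype VG] [Fintype VH] [Ring A] [StarRing A]
    (G : SimpleGraph VG) [DecidableRel G.Adj]
    (H : SimpleGraph VH) [DecidableRel H.Adj]
    (U : Matrix VH VG A) (hU : IsMagicUnitary U)
    (hcomm : U * G.adjMatrix A = H.adjMatrix A * U) :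
    ∀ {x y : VG} (_ : G.Walk x y) (a b : VH), U a x * U b y ≠ 0 → H.Reachable a b := by
  intro x y w
  induction w with
  | nil =>
    intro a b h
    rcases eq_or_ne a b with rfl | hne
    · exact SimpleGraph.Reachable.refl a
    · exact absurd (hU.2.2.2.1 a _ b hne) h
  | @cons u v w hadj w' ih =>
    intro a b h
    have hone : (∑ c, U c v) = (1 : A) := hU.2.2.2.2.1 v
    have hsum : U a u * U b w = ∑ c, U a u * U c v * U b w := by
      calc U a u * U b w = U a u * (∑ c, U c v) * U b w := by rw [hone, mul_one]
        _ = ∑ c, U a u * U c v * U b w := by rw [Finset.mul_sum, Finset.sum_mul]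
    obtain ⟨c, hc⟩ : ∃ c, U a u * U c v * U b w ≠ 0 := by
      by_contra hall
      push_neg at hall
      exact h (hsum.trans (Finset.sum_eq_zero fun c _ => hall c))
    have h1 : U a u * U c v ≠ 0 := fun h0 => hc (by rw [h0, zero_mul])
    have h2 : U c v * U b w ≠ 0 := fun h0 => hc (by rw [mul_assoc, h0, mul_zero])
    exact ((magic_adj G H U hU hcomm a c u v h1 hadj).reachable).trans (ih c b h2)

/-- a quantum isomorphism between finite graphs automatically
preserves the partitions into connected components: if `u_{ax} u_{by} ≠ 0`, then
`x, y` lie in the same component of `G` iff `a, b` lie in the same component of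
`H`. -/
theorem stmt_11 {VG VH A : Type*} [Fintype VG] [Fintype VH] [CStarAlgebra A]
    (G : SimpleGraph VG) [DecidableRel G.Adj]
    (H : SimpleGraph VH) [DecidableRel H.Adj]
    (U : Matrix VH VG A) (hU : IsMagicUnitary U)
    (hcomm : U * G.adjMatrix A = H.adjMatrix A * U)
    (a b : VH) (x y : VG) (h : U a x * U b y ≠ 0) :
    G.Reachable x y ↔ H.Reachable a b := by
  obtain ⟨hidem, hstar, hrow, hcol, hcolsum, hrowsum⟩ := hU
  have hU' : IsMagicUnitary U := ⟨hidem, hstar, hrow, hcol, hcolsum, hrowsum⟩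
  have hUT : IsMagicUnitary U.transpose := by
    refine ⟨fun i j => hidem j i, fun i j => hstar j i,
      fun i j k hjk => hcol j i k hjk, fun i j k hik => hrow j i k hik,
      fun j => hrowsum j, fun i => hcolsum i⟩
  have hcommT : U.transpose * H.adjMatrix A = G.adjMatrix A * U.transpose := by
    funext p q
    have hent := congrFun (congrFun hcomm q) p
    rw [rect_mul_adjMatrix, rect_adjMatrix_mul] at hent
    rw [rect_mul_adjMatrix, rect_adjMatrix_mul]
    simpa [Matrix.transpose_apply] using hent.symm
  constructor
  · rintro ⟨w⟩
    exact magic_walk G H U hU' hcomm w a b h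
  · rintro ⟨w⟩
    exact magic_walk H G U.transpose hUT hcommT w x y h
end

section
/- Let G be a finite connected graph with at least 2 vertices whose centre Z(G) is contained in a complete block and is not a cut vertex, and suppose every vertex of that block B is a cut vertex. If v, v' ∈ B are distinct cut vertices belonging to Z(G), then every cut vertex of B belongs to Z(G). -/
open SimpleGraph

variable {V : Type*}

variable {G : SimpleGraph V}

lemma induce_connected_of_adj (s : Set V) (hne : s.Nonempty)
    (h : ∀ x ∈ s, ∀ y ∈ s, x ≠ y → G.Adj x y) : (G.induce s).Connected := by
  rw [connected_iff]
  refine ⟨fun a b => ?_, ⟨⟨hne.choose, hne.choose_spec⟩⟩⟩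
  rcases eq_or_ne a b with rfl | hab
  · exact Reachable.refl _
  · exact SimpleGraph.Adj.reachable
      (by exact h a a.2 b b.2 (fun hh => hab (Subtype.ext hh)))

noncomputable def induceInduceIso (s : Set V) (t : Set ↥s) :
    (G.induce s).induce t ≃g G.induce (Subtype.val '' t) where
  toEquiv := Equiv.Set.image Subtype.val t Subtype.val_injective
  map_rel_iff' := by
    intro a b
    exact Iff.rfl

lemma connected_induce_induce {s : Set V} (w : ↥s)
    (h : (G.induce (s \ {(w : V)})).Connected) :
    ((G.induce s).induce {w}ᶜ).Connected := by
  rw [(induceInduceIso s {w}ᶜ).connected_iff]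
  have hset : (Subtype.val '' ({w}ᶜ : Set ↥s)) = s \ {(w : V)} := by
    ext x
    constructor
    · rintro ⟨y, hy, rfl⟩
      exact ⟨y.2, fun hx => hy (Subtype.ext hx)⟩
    · rintro ⟨hxs, hxw⟩
      exact ⟨⟨x, hxs⟩, fun hh => hxw (congrArg Subtype.val hh), rfl⟩
  rwa [hset]

lemma strip_start {a b : V} (p : G.Walk a b) (hp : p.IsPath) (hab : a ≠ b) :
    (G.induce ({x | x ∈ p.support} \ {a})).Connected ∧ b ∈ ({x | x ∈ p.support} \ {a}) := by
  cases p with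
  | nil => exact absurd rfl hab
  | cons h q =>
    rw [Walk.cons_isPath_iff] at hp
    have hset : ({x | x ∈ (Walk.cons h q).support} \ {a}) = {x | x ∈ q.support} := by
      ext x
      simp only [Walk.support_cons, List.mem_cons, Set.mem_diff, Set.mem_setOf_eq,
        Set.mem_singleton_iff]
      constructor
      · rintro ⟨hx | hx, hxa⟩
        · exact absurd hx hxa
        · exact hx
      · intro hx
        exact ⟨Or.inr hx, fun hxa => hp.2 (hxa ▸ hx)⟩
    rw [hset]
    exact ⟨q.connected_induce_support, q.end_mem_support⟩

lemma strip_end {a b : V} (p : G.Walk a b) (hp : p.IsPath) (hab : a ≠ b) :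
    (G.induce ({x | x ∈ p.support} \ {b})).Connected ∧ a ∈ ({x | x ∈ p.support} \ {b}) := by
  have h := strip_start p.reverse hp.reverse hab.symm
  rwa [show {x | x ∈ p.reverse.support} = {x | x ∈ p.support} by
    ext x; simp [Walk.support_reverse]] at h

lemma exists_prefix_until {a b : V} (p : G.Walk a b) (S : Set V) (hb : b ∈ S) :
    ∃ (c : V) (q : G.Walk a c), c ∈ S ∧ (∀ x ∈ q.support, x ∈ p.support) ∧
      (∀ x ∈ q.support, x ∈ S → x = c) ∧ (p.IsPath → q.IsPath) := by
  induction p with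
  | nil => exact ⟨_, Walk.nil, hb, by simp, by simp, fun _ => by simp⟩
  | @cons u x w h q' ih =>
    by_cases ha : u ∈ S
    · exact ⟨u, Walk.nil, ha, by simp, by simp, fun _ => by simp⟩
    · obtain ⟨c, q, hc, hsub, honly, hpath⟩ := ih hb
      refine ⟨c, Walk.cons h q, hc, ?_, ?_, ?_⟩
      · intro z hz
        simp only [Walk.support_cons, List.mem_cons] at hz ⊢
        exact hz.imp id (fun hz => hsub z hz)
      · intro z hz hzS
        simp only [Walk.support_cons, List.mem_cons] at hz
        rcases hz with rfl | hz
        · exact absurd hzS ha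
        · exact honly z hz hzS
      · intro hP
        rw [Walk.cons_isPath_iff] at hP ⊢
        exact ⟨hpath hP.1, fun hu => hP.2 (hsub u hu)⟩

lemma dist_split (hG : G.Connected) {a b z : V} (p : G.Walk a b)
    (hp : p.length = G.dist a b) (hz : z ∈ p.support) :
    G.dist a z + G.dist z b = G.dist a b := by
  classical
  have h1 : G.dist a z ≤ (p.takeUntil z hz).length := dist_le _
  have h2 : G.dist z b ≤ (p.dropUntil z hz).length := dist_le _
  have h3 : (p.takeUntil z hz).length + (p.dropUntil z hz).length = p.length := by
    have := congrArg Walk.length (p.take_spec hz)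
    rwa [Walk.length_append] at this
  have h4 := hG.dist_triangle (u := a) (v := z) (w := b)
  omega

set_option maxHeartbeats 1000000 in
lemma two_conn_aux (G : SimpleGraph V) (B : Set V)
    {v v' w0 : V} (hv : v ∈ B) (hv' : v' ∈ B) (hne : v ≠ v')
    (hcomp : ∀ x ∈ B, ∀ y ∈ B, x ≠ y → G.Adj x y)
    (P1 : G.Walk v w0) (Q1 : G.Walk v' w0)
    (hP1 : P1.IsPath) (hQ1 : Q1.IsPath)
    (hPB : ∀ x ∈ P1.support, x ∈ B → x = v)
    (hQB : ∀ x ∈ Q1.support, x ∈ B → x = v')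
    (hPQ : ∀ x ∈ P1.support, x ∈ Q1.support → x = w0)
    (hw0B : w0 ∉ B) :
    IsTwoConnectedGraph (G.induce (B ∪ {x | x ∈ P1.support} ∪ {x | x ∈ Q1.support})) := by
  classical
  intro w
  obtain ⟨ww, hwC⟩ := w
  apply connected_induce_induce
  show (G.induce ((B ∪ {x | x ∈ P1.support} ∪ {x | x ∈ Q1.support}) \ {ww})).Connected
  have hvP : v ∈ P1.support := P1.start_mem_support
  have hw0P : w0 ∈ P1.support := P1.end_mem_support
  have hv'Q : v' ∈ Q1.support := Q1.start_mem_support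
  have hw0Q : w0 ∈ Q1.support := Q1.end_mem_support
  have hw0v : w0 ≠ v := fun h => hw0B (h ▸ hv)
  have hw0v' : w0 ≠ v' := fun h => hw0B (h ▸ hv')
  have hvQ : v ∉ Q1.support := fun h => hne (hQB v h hv)
  have hv'P : v' ∉ P1.support := fun h => hne ((hPB v' h hv').symm)
  have hBc : (G.induce B).Connected := induce_connected_of_adj B ⟨v, hv⟩ hcomp
  have hQc : (G.induce {x | x ∈ Q1.support}).Connected := Q1.connected_induce_support
  have hPc : (G.induce {x | x ∈ P1.support}).Connected := P1.connected_induce_support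
  by_cases hww0 : ww = w0
  · subst hww0
    obtain ⟨cP, hvmem⟩ := strip_end P1 hP1 (fun h => hw0v h.symm)
    obtain ⟨cQ, hv'mem⟩ := strip_end Q1 hQ1 (fun h => hw0v' h.symm)
    have hEq : (B ∪ {x | x ∈ P1.support} ∪ {x | x ∈ Q1.support}) \ {ww}
        = (B ∪ ({x | x ∈ P1.support} \ {ww})) ∪ ({x | x ∈ Q1.support} \ {ww}) := by
      ext x
      simp only [Set.mem_diff, Set.mem_union, Set.mem_setOf_eq, Set.mem_singleton_iff]
      have h1 : x ∈ B → x ≠ ww := fun h1 h2 => hw0B (h2 ▸ h1)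
      tauto
    rw [hEq]
    exact induce_union_connected (induce_union_connected hBc.preconnected cP.preconnected ⟨v, hv, hvmem⟩).preconnected cQ.preconnected
      ⟨v', Or.inl hv', hv'mem⟩
  by_cases hwv : ww = v
  · subst hwv
    obtain ⟨cP, hw0mem⟩ := strip_start P1 hP1 (fun h => hw0v h.symm)
    have hBv : (G.induce (B \ {ww})).Connected :=
      induce_connected_of_adj _ ⟨v', hv', fun h => hne.symm h⟩
        (fun a ha b hb => hcomp a ha.1 b hb.1)
    have hEq : (B ∪ {x | x ∈ P1.support} ∪ {x | x ∈ Q1.support}) \ {ww}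
        = ((B \ {ww}) ∪ {x | x ∈ Q1.support}) ∪ ({x | x ∈ P1.support} \ {ww}) := by
      ext x
      simp only [Set.mem_diff, Set.mem_union, Set.mem_setOf_eq, Set.mem_singleton_iff]
      have h1 : x ∈ Q1.support → x ≠ ww := fun h hh => hvQ (hh ▸ h)
      tauto
    rw [hEq]
    exact induce_union_connected
      (induce_union_connected hBv.preconnected hQc.preconnected ⟨v', ⟨hv', fun h => hne.symm h⟩, hv'Q⟩).preconnected cP.preconnected
      ⟨w0, Or.inr hw0Q, hw0mem⟩
  by_cases hwv' : ww = v'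
  · subst hwv'
    obtain ⟨cQ, hw0mem⟩ := strip_start Q1 hQ1 (fun h => hw0v' h.symm)
    have hBv' : (G.induce (B \ {ww})).Connected :=
      induce_connected_of_adj _ ⟨v, hv, fun h => hne h⟩
        (fun a ha b hb => hcomp a ha.1 b hb.1)
    have hEq : (B ∪ {x | x ∈ P1.support} ∪ {x | x ∈ Q1.support}) \ {ww}
        = ((B \ {ww}) ∪ {x | x ∈ P1.support}) ∪ ({x | x ∈ Q1.support} \ {ww}) := by
      ext x
      simp only [Set.mem_diff, Set.mem_union, Set.mem_setOf_eq, Set.mem_singleton_iff]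
      have h1 : x ∈ P1.support → x ≠ ww := fun h hh => hv'P (hh ▸ h)
      tauto
    rw [hEq]
    exact induce_union_connected
      (induce_union_connected hBv'.preconnected hPc.preconnected ⟨v, ⟨hv, fun h => hne h⟩, hvP⟩).preconnected cQ.preconnected
      ⟨w0, Or.inr hw0P, hw0mem⟩
  by_cases hwB : ww ∈ B
  · have hwP : ww ∉ P1.support := fun h => hwv (hPB ww h hwB)
    have hwQ : ww ∉ Q1.support := fun h => hwv' (hQB ww h hwB)
    have hB' : (G.induce (B \ {ww})).Connected :=
      induce_connected_of_adj _ ⟨v, hv, fun h => hwv (by exact h.symm)⟩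
        (fun a ha b hb => hcomp a ha.1 b hb.1)
    have hEq : (B ∪ {x | x ∈ P1.support} ∪ {x | x ∈ Q1.support}) \ {ww}
        = ((B \ {ww}) ∪ {x | x ∈ P1.support}) ∪ {x | x ∈ Q1.support} := by
      ext x
      simp only [Set.mem_diff, Set.mem_union, Set.mem_setOf_eq, Set.mem_singleton_iff]
      have h1 : x ∈ P1.support → x ≠ ww := fun h hh => hwP (hh ▸ h)
      have h2 : x ∈ Q1.support → x ≠ ww := fun h hh => hwQ (hh ▸ h)
      tauto
    rw [hEq]
    exact induce_union_connected
      (induce_union_connected hB'.preconnected hPc.preconnected ⟨v, ⟨hv, fun h => hwv (by exact h.symm)⟩, hvP⟩).preconnected hQc.preconnected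
      ⟨v', Or.inl ⟨hv', fun h => hwv' (by exact h.symm)⟩, hv'Q⟩
  rcases hwC with (hwB' | hwP) | hwQ
  · exact absurd hwB' hwB
  · -- internal vertex of P1
    have hwQ : ww ∉ Q1.support := fun h => hww0 (hPQ ww hwP h)
    obtain ⟨cpre, hvpre⟩ :=
      strip_end (P1.takeUntil ww hwP) (hP1.takeUntil hwP) (fun h => hwv h.symm)
    obtain ⟨csuf, hw0suf⟩ :=
      strip_start (P1.dropUntil ww hwP) (hP1.dropUntil hwP) hww0
    have hsp : ∀ x, x ∈ P1.support ↔
        x ∈ (P1.takeUntil ww hwP).support ∨ x ∈ (P1.dropUntil ww hwP).support := by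
      intro x
      rw [← Walk.mem_support_append_iff, P1.take_spec hwP]
    have hEq : (B ∪ {x | x ∈ P1.support} ∪ {x | x ∈ Q1.support}) \ {ww}
        = ((B ∪ {x | x ∈ Q1.support}) ∪ ({x | x ∈ (P1.takeUntil ww hwP).support} \ {ww}))
          ∪ ({x | x ∈ (P1.dropUntil ww hwP).support} \ {ww}) := by
      ext x
      have h0 := hsp x
      have h1 : x ∈ B → x ≠ ww := fun h hh => hwB (hh ▸ h)
      have h2 : x ∈ Q1.support → x ≠ ww := fun h hh => hwQ (hh ▸ h)
      simp only [Set.mem_diff, Set.mem_union, Set.mem_setOf_eq, Set.mem_singleton_iff]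
      tauto
    rw [hEq]
    exact induce_union_connected
      (induce_union_connected (induce_union_connected hBc.preconnected hQc.preconnected ⟨v', hv', hv'Q⟩).preconnected cpre.preconnected
        ⟨v, Or.inl hv, hvpre⟩).preconnected
      csuf.preconnected ⟨w0, Or.inl (Or.inr hw0Q), hw0suf⟩
  · -- internal vertex of Q1
    have hwP : ww ∉ P1.support := fun h => hww0 (hPQ ww h hwQ)
    obtain ⟨cpre, hv'pre⟩ :=
      strip_end (Q1.takeUntil ww hwQ) (hQ1.takeUntil hwQ) (fun h => hwv' h.symm)
    obtain ⟨csuf, hw0suf⟩ :=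
      strip_start (Q1.dropUntil ww hwQ) (hQ1.dropUntil hwQ) hww0
    have hsp : ∀ x, x ∈ Q1.support ↔
        x ∈ (Q1.takeUntil ww hwQ).support ∨ x ∈ (Q1.dropUntil ww hwQ).support := by
      intro x
      rw [← Walk.mem_support_append_iff, Q1.take_spec hwQ]
    have hEq : (B ∪ {x | x ∈ P1.support} ∪ {x | x ∈ Q1.support}) \ {ww}
        = ((B ∪ {x | x ∈ P1.support}) ∪ ({x | x ∈ (Q1.takeUntil ww hwQ).support} \ {ww}))
          ∪ ({x | x ∈ (Q1.dropUntil ww hwQ).support} \ {ww}) := by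
      ext x
      have h0 := hsp x
      have h1 : x ∈ B → x ≠ ww := fun h hh => hwB (hh ▸ h)
      have h2 : x ∈ P1.support → x ≠ ww := fun h hh => hwP (hh ▸ h)
      simp only [Set.mem_diff, Set.mem_union, Set.mem_setOf_eq, Set.mem_singleton_iff]
      tauto
    rw [hEq]
    exact induce_union_connected
      (induce_union_connected (induce_union_connected hBc.preconnected hPc.preconnected ⟨v, hv, hvP⟩).preconnected cpre.preconnected
        ⟨v', Or.inl hv', hv'pre⟩).preconnected
      csuf.preconnected ⟨w0, Or.inl (Or.inr hw0P), hw0suf⟩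

/-- if the centre of a finite connected graph (on at least two
vertices) is contained in a complete block `B`, is not a single cut vertex, every
vertex of `B` is a cut vertex, and two distinct cut vertices of `B` lie in the
centre, then every cut vertex of `B` lies in the centre. -/
theorem stmt_12 [Fintype V] (G : SimpleGraph V) (hG : G.Connected)
    (hcard : 2 ≤ Fintype.card V)
    (B : Set V) (hB : IsCompleteBlock G B)
    (hsub : graphCenter G ⊆ B)
    (hnotcut : ¬ ∃ v : V, IsCutVertex G v ∧ graphCenter G = {v})
    (hallcut : ∀ b ∈ B, IsCutVertex G b)
    (v v' : V) (hv : v ∈ B) (hv' : v' ∈ B) (hne : v ≠ v')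
    (hvcut : IsCutVertex G v) (hv'cut : IsCutVertex G v')
    (hvZ : v ∈ graphCenter G) (hv'Z : v' ∈ graphCenter G) :
    ∀ b ∈ B, IsCutVertex G b → b ∈ graphCenter G := by
  classical
  intro b hbB hbcut
  by_contra hbZ
  haveI : Nonempty V := Fintype.card_pos_iff.mp (by omega)
  obtain ⟨hBlock, hcomp⟩ := hB
  have hvv' : ecc G v' = ecc G v := le_antisymm (hv'Z v) (hvZ v')
  have hbv : b ≠ v := fun h => hbZ (h ▸ hvZ)
  have hbv' : b ≠ v' := fun h => hbZ (h ▸ hv'Z)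
  have hBdist : ∀ x ∈ B, ∀ y ∈ B, G.dist x y ≤ 1 := by
    intro x hx y hy
    rcases eq_or_ne x y with rfl | hxy
    · simp [SimpleGraph.dist_self]
    · exact le_of_eq (SimpleGraph.dist_eq_one_iff_adj.mpr (hcomp x hx y hy hxy))
  have hle : ∀ x : V, G.dist v x ≤ ecc G v := fun x => Finset.le_sup (Finset.mem_univ x)
  have hle' : ∀ x : V, G.dist v' x ≤ ecc G v' := fun x => Finset.le_sup (Finset.mem_univ x)
  have heccb_le : ecc G b ≤ ecc G v + 1 := by
    apply Finset.sup_le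
    intro x _
    have h1 := hG.dist_triangle (u := b) (v := v) (w := x)
    have h2 := hBdist b hbB v hv
    have h3 := hle x
    omega
  have heccb_gt : ecc G v < ecc G b := by
    have hh : ¬ (∀ u : V, ecc G b ≤ ecc G u) := hbZ
    push_neg at hh
    obtain ⟨u0, hu0⟩ := hh
    exact lt_of_le_of_lt (hvZ u0) hu0
  have heccb : ecc G b = ecc G v + 1 := by omega
  obtain ⟨u, -, hu⟩ := Finset.exists_mem_eq_sup (Finset.univ) Finset.univ_nonempty (G.dist b)
  have hbu : G.dist b u = ecc G v + 1 := by
    rw [← heccb]; exact hu.symm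
  have hvu : G.dist v u = ecc G v := by
    have h1 := hle u
    have h2 := hG.dist_triangle (u := b) (v := v) (w := u)
    have h3 := hBdist b hbB v hv
    omega
  have hv'u : G.dist v' u = ecc G v := by
    have h1 := hle' u
    have h2 := hG.dist_triangle (u := b) (v := v') (w := u)
    have h3 := hBdist b hbB v' hv'
    omega
  have hsupp : ∀ (a : V), G.dist a u = ecc G v →
      ∀ (p : G.Walk a u), p.length = G.dist a u →
      ∀ z ∈ p.support, z ∈ B → z = a := by
    intro a hau p hp z hz hzB
    by_contra hza
    have hsplit := dist_split hG p hp hz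
    have h1 : 1 ≤ G.dist a z := hG.pos_dist_of_ne (fun h => hza h.symm)
    have h2 : G.dist b z ≤ 1 := hBdist b hbB z hzB
    have h3 := hG.dist_triangle (u := b) (v := z) (w := u)
    omega
  obtain ⟨P0, hP0⟩ := hG.exists_walk_length_eq_dist v u
  obtain ⟨Q0, hQ0⟩ := hG.exists_walk_length_eq_dist v' u
  have hPpath : (P0.toPath : G.Walk v u).IsPath := P0.toPath.2
  have hQpath : (Q0.toPath : G.Walk v' u).IsPath := Q0.toPath.2
  have hPB : ∀ z ∈ (P0.toPath : G.Walk v u).support, z ∈ B → z = v := fun z hz =>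
    hsupp v hvu P0 hP0 z (P0.support_toPath_subset hz)
  have hQB : ∀ z ∈ (Q0.toPath : G.Walk v' u).support, z ∈ B → z = v' := fun z hz =>
    hsupp v' hv'u Q0 hQ0 z (Q0.support_toPath_subset hz)
  obtain ⟨w0, P1, hw0Q, hP1sub, hP1only, hP1path'⟩ :=
    exists_prefix_until (P0.toPath : G.Walk v u) {x | x ∈ (Q0.toPath : G.Walk v' u).support}
      ((Q0.toPath : G.Walk v' u).end_mem_support)
  have hP1path : P1.IsPath := hP1path' hPpath
  have hw0Q' : w0 ∈ (Q0.toPath : G.Walk v' u).support := hw0Q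
  have hw0P : w0 ∈ (P0.toPath : G.Walk v u).support := hP1sub w0 P1.end_mem_support
  have hw0B : w0 ∉ B := by
    intro h
    exact hne ((hPB w0 hw0P h).symm.trans (hQB w0 hw0Q' h))
  have hQ1path : ((Q0.toPath : G.Walk v' u).takeUntil w0 hw0Q').IsPath :=
    hQpath.takeUntil hw0Q'
  have hP1B : ∀ x ∈ P1.support, x ∈ B → x = v := fun x hx => hPB x (hP1sub x hx)
  have hQ1B : ∀ x ∈ ((Q0.toPath : G.Walk v' u).takeUntil w0 hw0Q').support, x ∈ B → x = v' :=
    fun x hx => hQB x ((Q0.toPath : G.Walk v' u).support_takeUntil_subset hw0Q' hx)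
  have hPQ : ∀ x ∈ P1.support,
      x ∈ ((Q0.toPath : G.Walk v' u).takeUntil w0 hw0Q').support → x = w0 :=
    fun x hx hx' =>
      hP1only x hx ((Q0.toPath : G.Walk v' u).support_takeUntil_subset hw0Q' hx')
  have h2conn := two_conn_aux G B hv hv' hne hcomp P1
    ((Q0.toPath : G.Walk v' u).takeUntil w0 hw0Q') hP1path hQ1path hP1B hQ1B hPQ hw0B
  have hBC : B ⊆ B ∪ {x | x ∈ P1.support}
      ∪ {x | x ∈ ((Q0.toPath : G.Walk v' u).takeUntil w0 hw0Q').support} :=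
    fun x hx => Or.inl (Or.inl hx)
  have hCeq := hBlock.2 _ hBC h2conn
  have hw0C : w0 ∈ B ∪ {x | x ∈ P1.support}
      ∪ {x | x ∈ ((Q0.toPath : G.Walk v' u).takeUntil w0 hw0Q').support} :=
    Or.inl (Or.inr P1.end_mem_support)
  rw [hCeq] at hw0C
  exact hw0B hw0C
end
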